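/- arXiv:2303.02231 — 4 statements merged into one kernel-verified Lean document; each statement's English description precedes it below -/
import Mathlib

section
/- Assume g is unimodular, i.e. μ + Tr D = 0. Then J is harmonic if and only if (i) μγ + D_sγ − J'D_aJ'ρ = 0 and (ii) D_aJ'D_aJ' = J'D_aJ'D_a. -/
open scoped BigOperators
open Matrix

noncomputable section

/-- The underlying `2n`-dimensional real vector space `ℝ^{2n}`, whose standard basis
plays the role of the orthonormal basis `e₀, e₁, …, e_{2n-1}`. -/
abbrev G (n : ℕ) := Fin (2*n) → ℝ

/-- The inner product `⟨·,·⟩` making the standard basis orthonormal. -/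
def inn {n : ℕ} (x y : G n) : ℝ := ∑ i, x i * y i

/-- The standard basis vector `e k` (indexed by a natural number `k`). -/
def E (n : ℕ) (k : ℕ) : G n := fun i => if (i : ℕ) = k then 1 else 0

/-- Membership in `a = span{e₂, …, e_{2n-1}}`. -/
def inA {n : ℕ} (x : G n) : Prop := ∀ i : Fin (2*n), (i : ℕ) < 2 → x i = 0

/-- The orthogonal almost complex structure `J e_{2i} = e_{2i+1}`, `J e_{2i+1} = -e_{2i}`. -/
def Jm (n : ℕ) : Matrix (Fin (2*n)) (Fin (2*n)) ℝ :=
  Matrix.of fun k l =>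
    if (k : ℕ) = (l : ℕ) + 1 ∧ Even (l : ℕ) then (1 : ℝ)
    else if (l : ℕ) = (k : ℕ) + 1 ∧ Even (k : ℕ) then -1 else 0

/-- `D` is (the extension by zero of) an endomorphism of `a`: it vanishes on
`span{e₀, e₁}` and takes values orthogonal to `span{e₀, e₁}`. -/
def DinA {n : ℕ} (D : Matrix (Fin (2*n)) (Fin (2*n)) ℝ) : Prop :=
  ∀ k l : Fin (2*n), ((k : ℕ) < 2 ∨ (l : ℕ) < 2) → D k l = 0

/-- The matrix of `L` determined by the data `μ, v₀, w₀, D`, i.e.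
`L e₀ = 0`, `L e₁ = μ e₁ + v₀` and `L x = ⟨w₀, x⟩ e₁ + D x` for `x ∈ a`
(for `v₀, w₀ ∈ a` and `D` an endomorphism of `a`). -/
def Lm {n : ℕ} (μ : ℝ) (v₀ w₀ : G n) (D : Matrix (Fin (2*n)) (Fin (2*n)) ℝ) :
    Matrix (Fin (2*n)) (Fin (2*n)) ℝ :=
  Matrix.of fun k l =>
    (if (k : ℕ) = 1 ∧ (l : ℕ) = 1 then μ else 0)
      + (if (l : ℕ) = 1 then v₀ k else 0)
      + (if (k : ℕ) = 1 then w₀ l else 0)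
      + D k l

/-- The Lie bracket of the almost abelian Lie algebra `g = ℝ e₀ ⋉_L u`:
`[e₀, u] = L u` for `u ∈ u = span{e₁, …, e_{2n-1}}` and `[u, v] = 0` for `u, v ∈ u`. -/
def br {n : ℕ} (L : Matrix (Fin (2*n)) (Fin (2*n)) ℝ) (x y : G n) : G n :=
  inn x (E n 0) • L.mulVec y - inn y (E n 0) • L.mulVec x

/-- `nabla` is the Levi-Civita connection of `⟨·,·⟩`, i.e. it satisfies the Koszul
formula `2⟨∇_x y, z⟩ = ⟨[x,y],z⟩ − ⟨[y,z],x⟩ + ⟨[z,x],y⟩`. -/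
def Koszul {n : ℕ} (L : Matrix (Fin (2*n)) (Fin (2*n)) ℝ) (nabla : G n → G n → G n) : Prop :=
  ∀ x y z : G n, 2 * inn (nabla x y) z
    = inn (br L x y) z - inn (br L y z) x + inn (br L z x) y

/-- `(∇_y J)(x) = ∇_y (Jx) − J ∇_y x`. -/
def covJ {n : ℕ} (nabla : G n → G n → G n) (y x : G n) : G n :=
  nabla y ((Jm n).mulVec x) - (Jm n).mulVec (nabla y x)

/-- The rough Laplacian
`(∇*∇J)(x) = Σ_i ((∇_{e_i}(∇_{e_i}J))(x) − (∇_{∇_{e_i}e_i} J)(x))`. -/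
def roughLap {n : ℕ} (nabla : G n → G n → G n) (x : G n) : G n :=
  ∑ i : Fin (2*n),
    (nabla (E n i.val) (covJ nabla (E n i.val) x)
      - covJ nabla (E n i.val) (nabla (E n i.val) x)
      - covJ nabla (nabla (E n i.val) (E n i.val)) x)

/-- `J` is harmonic: `J ∘ (∇*∇J) = (∇*∇J) ∘ J`. -/
def Harmonic {n : ℕ} (nabla : G n → G n → G n) : Prop :=
  ∀ x : G n, (Jm n).mulVec (roughLap nabla x) = roughLap nabla ((Jm n).mulVec x)

/-- Symmetric part of a matrix. -/
def symPart {n : ℕ} (M : Matrix (Fin (2*n)) (Fin (2*n)) ℝ) :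
    Matrix (Fin (2*n)) (Fin (2*n)) ℝ := (1/2 : ℝ) • (M + Mᵀ)

/-- Skew-symmetric part of a matrix. -/
def skewPart {n : ℕ} (M : Matrix (Fin (2*n)) (Fin (2*n)) ℝ) :
    Matrix (Fin (2*n)) (Fin (2*n)) ℝ := (1/2 : ℝ) • (M - Mᵀ)

/-- `γ = (v₀ + w₀)/2`. -/
def gam {n : ℕ} (v₀ w₀ : G n) : G n := (1/2 : ℝ) • (v₀ + w₀)

/-- `ρ = (v₀ − w₀)/2`. -/
def rho {n : ℕ} (v₀ w₀ : G n) : G n := (1/2 : ℝ) • (v₀ - w₀)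

/-- The fundamental 2-form `ω(x,y) = ⟨Jx, y⟩`. -/
def om {n : ℕ} (x y : G n) : ℝ := inn ((Jm n).mulVec x) y

/-- `(∇_x ω)(y,z) = −ω(∇_x y, z) − ω(y, ∇_x z)`. -/
def nablaOm {n : ℕ} (nabla : G n → G n → G n) (x y z : G n) : ℝ :=
  - om (nabla x y) z - om y (nabla x z)

/-- `dω(x,y,z) = −ω([x,y],z) − ω([y,z],x) − ω([z,x],y)`. -/
def dOm {n : ℕ} (L : Matrix (Fin (2*n)) (Fin (2*n)) ℝ) (x y z : G n) : ℝ :=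
  - om (br L x y) z - om (br L y z) x - om (br L z x) y

/-- The codifferential `δω(x) = −Σ_i (∇_{e_i}ω)(e_i, x)`. -/
def deltaOm {n : ℕ} (nabla : G n → G n → G n) (x : G n) : ℝ :=
  - ∑ i : Fin (2*n), nablaOm nabla (E n i.val) (E n i.val) x

/-- The Nijenhuis tensor `N(x,y) = [x,y] + J([Jx,y] + [x,Jy]) − [Jx,Jy]`. -/
def Nij {n : ℕ} (L : Matrix (Fin (2*n)) (Fin (2*n)) ℝ) (x y : G n) : G n :=
  br L x y
    + (Jm n).mulVec (br L ((Jm n).mulVec x) y + br L x ((Jm n).mulVec y))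
    - br L ((Jm n).mulVec x) ((Jm n).mulVec y)

/-- `T⁻(x,y,z) = (∇_x ω)(y,z) − (∇_{Jx} ω)(Jy,z)`. -/
def Tminus {n : ℕ} (nabla : G n → G n → G n) (x y z : G n) : ℝ :=
  nablaOm nabla x y z - nablaOm nabla ((Jm n).mulVec x) ((Jm n).mulVec y) z

/-- `T⁺(x,y,z) = (∇_x ω)(y,z) + (∇_{Jx} ω)(Jy,z)`. -/
def Tplus {n : ℕ} (nabla : G n → G n → G n) (x y z : G n) : ℝ :=
  nablaOm nabla x y z + nablaOm nabla ((Jm n).mulVec x) ((Jm n).mulVec y) z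

/-- `U(x,y,z) = ⟨x,y⟩δω(z) − ⟨x,z⟩δω(y) − ⟨x,Jy⟩δω(Jz) + ⟨x,Jz⟩δω(Jy)`. -/
def Uten {n : ℕ} (nabla : G n → G n → G n) (x y z : G n) : ℝ :=
  inn x y * deltaOm nabla z - inn x z * deltaOm nabla y
    - inn x ((Jm n).mulVec y) * deltaOm nabla ((Jm n).mulVec z)
    + inn x ((Jm n).mulVec z) * deltaOm nabla ((Jm n).mulVec y)

/-- The Lee form `θ(x) = −(1/(n−1)) δω(Jx)`. -/
def Lee {n : ℕ} (nabla : G n → G n → G n) (x : G n) : ℝ :=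
  -(1/((n : ℝ) - 1)) * deltaOm nabla ((Jm n).mulVec x)

/-- The identity of `a`, extended by zero to `g`. -/
def Ia (n : ℕ) : Matrix (Fin (2*n)) (Fin (2*n)) ℝ :=
  Matrix.of fun k l => if k = l ∧ 2 ≤ (k : ℕ) then (1 : ℝ) else 0

/-!
Write `u ∧ v` for `u vᵀ - v uᵀ`. The Koszul formula gives `∇_y = ⟨y, e₀⟩ A + e₀ ∧ S y`, so each
`N_i := ∇_{e_i}` is a matrix and `∇_y J = [N_y, J]`. As `S e₀ = A e₀ = 0`, `∇_{e_i} e_i = S_ii e₀`,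
and unimodularity (`tr S = 0`) removes the correction term: `∇*∇J = Σ [N_i, [N_i, J]]`.
Since `J² = -1`, `[J, [N, [N, J]]] = 2 [N J N, J]`, so `J` is harmonic iff `Σ [N_i J N_i, J] = 0`.
The `i = 0` summand is `[A J A, J]`; for `N = e₀ ∧ s` one gets `[N J N, J] = ⟨s, e₁⟩ W(s)` with
`W(v) = v ∧ e₁ + J v ∧ e₀` linear in `v`, and `Σ ⟨S e_i, e₁⟩ S e_i = S² e₁`.
For our `L`, `A = ρ ∧ e₁ + D_a`, `S² e₁ ∈ ℝ e₁ + μγ + D_s γ` and `W(e₁) = 0`, while the cross terms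
of `[A J A, J]` give `-W(J D_a J ρ)`. So harmonicity reads `[D_a J D_a, J] + W(c) = 0` with
`c = μγ + D_s γ - J D_a J ρ ∈ a`; evaluating at `e₁` gives `c = 0`, and what is left is (ii) on `a`.
-/

attribute [local instance] LieRing.ofAssociativeRing LieAlgebra.ofAssociativeAlgebra

local notation "𝕄" k:max => Matrix (Fin (2 * k)) (Fin (2 * k)) ℝ

section Basis

variable {n : ℕ}

theorem E_val_eq_single (i : Fin (2 * n)) : E n i = Pi.single i 1 := by
  funext k
  simp [E, Pi.single_apply, Fin.ext_iff]

theorem dotProduct_E (x : G n) (i : Fin (2 * n)) : x ⬝ᵥ E n i = x i := by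
  rw [E_val_eq_single, dotProduct_single, mul_one]

theorem E_zero_dotProduct_E_one : E n 0 ⬝ᵥ E n 1 = 0 := by
  simp only [dotProduct, E]
  exact Finset.sum_eq_zero fun i _ => by split_ifs <;> simp_all

theorem E_one_dotProduct_E_zero : E n 1 ⬝ᵥ E n 0 = 0 := by
  rw [dotProduct_comm, E_zero_dotProduct_E_one]

theorem E_dotProduct_E_self {j : ℕ} (hj : j < 2 * n) : E n j ⬝ᵥ E n j = 1 := by
  rw [show j = (⟨j, hj⟩ : Fin (2 * n)) from rfl, dotProduct_E, E]
  simp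

theorem E_dotProduct_E_zero (i : Fin (2 * n)) :
    E n i ⬝ᵥ E n 0 = if (i : ℕ) = 0 then 1 else 0 := by
  rw [dotProduct_comm, dotProduct_E, E]

theorem sum_E_dotProduct_E_zero (hn : 0 < n) : ∑ i : Fin (2 * n), E n i ⬝ᵥ E n 0 = 1 := by
  rw [Finset.sum_eq_single ⟨0, by omega⟩]
  · exact E_dotProduct_E_self (by omega)
  · intro i _ hi
    rw [E_dotProduct_E_zero, if_neg (fun h => hi (Fin.ext h))]
  · simp

theorem sum_dotProduct_E_smul_E (x : G n) : ∑ i : Fin (2 * n), (x ⬝ᵥ E n i) • E n i = x := by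
  simp_rw [dotProduct_E, E_val_eq_single]
  exact (pi_eq_sum_univ' x).symm

end Basis

section SymmetricParts

variable {n : ℕ}

theorem symPart_transpose (M : 𝕄 n) : (symPart M)ᵀ = symPart M := by
  rw [symPart, transpose_smul, transpose_add, transpose_transpose, add_comm]

theorem skewPart_transpose (M : 𝕄 n) :
    (skewPart M)ᵀ = -skewPart M := by
  rw [skewPart, transpose_smul, transpose_sub, transpose_transpose, ← smul_neg, neg_sub]

theorem trace_symPart (M : 𝕄 n) : trace (symPart M) = trace M := by
  rw [symPart, trace_smul, trace_add, trace_transpose, smul_eq_mul]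
  ring

theorem mulVec_dotProduct_of_transpose_eq_neg {ι R : Type*} [Fintype ι] [CommRing R]
    {M : Matrix ι ι R} (hM : Mᵀ = -M) (x y : ι → R) : (M *ᵥ x) ⬝ᵥ y = -(x ⬝ᵥ (M *ᵥ y)) := by
  rw [dotProduct_comm, dotProduct_mulVec, ← mulVec_transpose, hM, neg_mulVec, neg_dotProduct,
    dotProduct_comm]

end SymmetricParts

section ComplexStructure

variable {n : ℕ}

theorem Jm_transpose : (Jm n)ᵀ = -Jm n := by
  ext k l
  simp only [Jm, transpose_apply, of_apply, Matrix.neg_apply, Nat.even_iff]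
  split_ifs <;> norm_num at *
  omega

theorem Jm_mul_Jm : Jm n * Jm n = -1 := by
  ext k l
  have hk := k.isLt
  -- the index that `J` pairs with `k`
  let p : Fin (2 * n) := ⟨k + 1 - 2 * (k % 2), by omega⟩
  rw [mul_apply, Finset.sum_eq_single p]
  · simp only [Jm, of_apply, Matrix.neg_apply, Matrix.one_apply, p, Nat.even_iff, Fin.ext_iff]
    split_ifs <;> norm_num at * <;> omega
  · intro j _ hj
    simp only [Jm, of_apply, Nat.even_iff, p, ne_eq, Fin.ext_iff] at hj ⊢
    split_ifs <;> norm_num at * <;> omega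
  · simp

theorem Jm_mulVec_Jm_mulVec (x : G n) : Jm n *ᵥ (Jm n *ᵥ x) = -x := by
  rw [mulVec_mulVec, Jm_mul_Jm, neg_mulVec, one_mulVec]

theorem Jm_mulVec_E_zero : Jm n *ᵥ E n 0 = E n 1 := by
  funext k
  have := k.isLt
  rw [E_val_eq_single (⟨0, by omega⟩ : Fin (2 * n)), mulVec_single_one]
  simp [Jm, E]

theorem Jm_mulVec_E_one : Jm n *ᵥ E n 1 = -E n 0 := by
  funext k
  have := k.isLt
  rw [E_val_eq_single (⟨1, by omega⟩ : Fin (2 * n)), mulVec_single_one]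
  simp only [Jm, E, col_apply, of_apply, Pi.neg_apply, Nat.even_iff]
  split_ifs <;> norm_num at * <;> omega

theorem Jm_mulVec_dotProduct (x y : G n) : (Jm n *ᵥ x) ⬝ᵥ y = -(x ⬝ᵥ (Jm n *ᵥ y)) :=
  mulVec_dotProduct_of_transpose_eq_neg Jm_transpose x y

theorem dotProduct_Jm_mulVec_self (x : G n) : x ⬝ᵥ (Jm n *ᵥ x) = 0 := by
  have h := Jm_mulVec_dotProduct x x
  rw [dotProduct_comm] at h
  linarith

theorem E_zero_dotProduct_Jm_mulVec (x : G n) : E n 0 ⬝ᵥ (Jm n *ᵥ x) = -(E n 1 ⬝ᵥ x) := by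
  rw [← neg_neg (E n 0 ⬝ᵥ _), ← Jm_mulVec_dotProduct, Jm_mulVec_E_zero]

theorem E_one_dotProduct_Jm_mulVec (x : G n) : E n 1 ⬝ᵥ (Jm n *ᵥ x) = E n 0 ⬝ᵥ x := by
  rw [← neg_neg (E n 1 ⬝ᵥ _), ← Jm_mulVec_dotProduct, Jm_mulVec_E_one, neg_dotProduct, neg_neg]

end ComplexStructure

section Subspace

variable {n : ℕ}

theorem inA.dotProduct_E {x : G n} (hx : inA x) {j : ℕ} (hj : j < 2) : x ⬝ᵥ E n j = 0 :=
  Finset.sum_eq_zero fun i _ => by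
    by_cases h : (i : ℕ) = j
    · rw [hx i (h ▸ hj), zero_mul]
    · simp [E, h]

theorem inA.E_dotProduct {x : G n} (hx : inA x) {j : ℕ} (hj : j < 2) : E n j ⬝ᵥ x = 0 := by
  rw [dotProduct_comm, hx.dotProduct_E hj]

theorem inA_iff {x : G n} : inA x ↔ x ⬝ᵥ E n 0 = 0 ∧ x ⬝ᵥ E n 1 = 0 := by
  refine ⟨fun hx => ⟨hx.dotProduct_E (by norm_num), hx.dotProduct_E (by norm_num)⟩,
    fun ⟨h0, h1⟩ i hi => ?_⟩
  rw [← dotProduct_E x i]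
  obtain h | h : (i : ℕ) = 0 ∨ (i : ℕ) = 1 := by omega
  all_goals rwa [h]

theorem inA.add {x y : G n} (hx : inA x) (hy : inA y) : inA (x + y) := fun i hi => by
  simp [hx i hi, hy i hi]

theorem inA.sub {x y : G n} (hx : inA x) (hy : inA y) : inA (x - y) := fun i hi => by
  simp [hx i hi, hy i hi]

theorem inA.smul {x : G n} (hx : inA x) (c : ℝ) : inA (c • x) := fun i hi => by
  simp [hx i hi]

theorem inA.Jm_mulVec {x : G n} (hx : inA x) : inA (Jm n *ᵥ x) := by
  rw [inA_iff, Jm_mulVec_dotProduct, Jm_mulVec_dotProduct, Jm_mulVec_E_zero, Jm_mulVec_E_one,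
    dotProduct_neg, hx.dotProduct_E Nat.one_lt_two,
    hx.dotProduct_E Nat.zero_lt_two]
  simp

theorem DinA.mulVec_E {M : 𝕄 n} (hM : DinA M) {j : ℕ}
    (hj : j < 2) : M *ᵥ E n j = 0 := by
  funext k
  simp only [mulVec, dotProduct, Pi.zero_apply]
  refine Finset.sum_eq_zero fun l _ => ?_
  by_cases h : (l : ℕ) = j
  · rw [hM k l (Or.inr (h ▸ hj)), zero_mul]
  · simp [E, h]

theorem DinA.inA_mulVec {M : 𝕄 n} (hM : DinA M) (x : G n) :
    inA (M *ᵥ x) := fun k hk => show ∑ l, M k l * x l = 0 from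
  Finset.sum_eq_zero fun l _ => by rw [hM k l (Or.inl hk), zero_mul]

theorem DinA.E_dotProduct_mulVec {M : 𝕄 n} (hM : DinA M)
    {j : ℕ} (hj : j < 2) (x : G n) : E n j ⬝ᵥ (M *ᵥ x) = 0 :=
  (hM.inA_mulVec x).E_dotProduct hj

theorem DinA.symPart {M : 𝕄 n} (hM : DinA M) :
    DinA (symPart M) := fun k l h => by
  simp [_root_.symPart, hM k l h, hM l k h.symm]

theorem DinA.skewPart {M : 𝕄 n} (hM : DinA M) :
    DinA (skewPart M) := fun k l h => by
  simp [_root_.skewPart, hM k l h, hM l k h.symm]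

theorem inA_gam {v₀ w₀ : G n} (hv : inA v₀) (hw : inA w₀) : inA (gam v₀ w₀) := fun i hi => by
  simp [gam, hv i hi, hw i hi]

theorem inA_rho {v₀ w₀ : G n} (hv : inA v₀) (hw : inA w₀) : inA (rho v₀ w₀) := fun i hi => by
  simp [rho, hv i hi, hw i hi]

end Subspace

section Connection

variable {n : ℕ}

def wedge (u v : G n) : 𝕄 n := vecMulVec u v - vecMulVec v u

theorem vecMulVec_mulVec_eq_smul {ι R : Type*} [Fintype ι] [CommRing R] (u v w : ι → R) :
    vecMulVec u v *ᵥ w = (v ⬝ᵥ w) • u := by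
  rw [vecMulVec_mulVec, op_smul_eq_smul]

theorem wedge_mulVec (u v x : G n) : wedge u v *ᵥ x = (v ⬝ᵥ x) • u - (u ⬝ᵥ x) • v := by
  rw [wedge, sub_mulVec, vecMulVec_mulVec_eq_smul, vecMulVec_mulVec_eq_smul]

theorem inn_eq_dotProduct (x y : G n) : inn x y = x ⬝ᵥ y := rfl

def connMatrix (S A : 𝕄 n) (y : G n) :
    𝕄 n :=
  (y ⬝ᵥ E n 0) • A + wedge (E n 0) (S *ᵥ y)

theorem koszul_connMatrix (L : 𝕄 n) (x y z : G n) :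
    inn (br L x y) z - inn (br L y z) x + inn (br L z x) y
      = 2 * inn (connMatrix (symPart L) (skewPart L) x *ᵥ y) z := by
  have transpose_dot (a b : G n) : (Lᵀ *ᵥ a) ⬝ᵥ b = (L *ᵥ b) ⬝ᵥ a := by
    rw [mulVec_transpose, ← dotProduct_mulVec, dotProduct_comm]
  simp only [inn_eq_dotProduct, br, connMatrix, symPart, skewPart, add_mulVec, smul_mulVec,
    sub_mulVec, wedge_mulVec, smul_dotProduct, add_dotProduct, sub_dotProduct, transpose_dot,
    smul_eq_mul]
  rw [dotProduct_comm (E n 0) y, dotProduct_comm (E n 0) z]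
  ring

theorem Koszul.eq_connMatrix {L : 𝕄 n}
    {nabla : G n → G n → G n} (hK : Koszul L nabla) :
    nabla = fun y x => connMatrix (symPart L) (skewPart L) y *ᵥ x := by
  funext y x
  refine funext fun j => ?_
  have h := hK y x (E n j)
  rw [koszul_connMatrix] at h
  simp only [inn_eq_dotProduct, dotProduct_E] at h
  linarith

end Connection

section RoughLaplacian

variable {n : ℕ}

theorem lie_lie_lie_of_mul_self_eq_neg_one {R : Type*} [Ring R] {J : R} (hJ : J * J = -1)
    (N : R) : ⁅J, ⁅N, ⁅N, J⁆⁆⁆ = 2 • ⁅N * J * N, J⁆ := by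
  have h : ⁅J, ⁅N, ⁅N, J⁆⁆⁆ - 2 • ⁅N * J * N, J⁆ = J * J * (N * N) - N * N * (J * J) := by
    simp only [Ring.lie_def]
    noncomm_ring
  rwa [hJ, neg_one_mul, mul_neg_one, sub_self, sub_eq_zero] at h

theorem roughLap_mulVec (N : G n → 𝕄 n) (x : G n) :
    roughLap (fun y x => N y *ᵥ x) x
      = (∑ i : Fin (2 * n),
          (⁅N (E n i), ⁅N (E n i), Jm n⁆⁆ - ⁅N (N (E n i) *ᵥ E n i), Jm n⁆)) *ᵥ x := by
  simp only [roughLap, covJ, sum_mulVec, Ring.lie_def, sub_mulVec, mulVec_mulVec, mulVec_sub,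
    mul_sub, sub_mul, Matrix.mul_assoc]

theorem harmonic_iff_lie_eq_zero {nabla : G n → G n → G n}
    {Δ : 𝕄 n} (h : ∀ x, roughLap nabla x = Δ *ᵥ x) :
    Harmonic nabla ↔ ⁅Jm n, Δ⁆ = 0 := by
  simp only [Harmonic, h, mulVec_mulVec, Ring.lie_def, sub_eq_zero, ext_iff_mulVec]

end RoughLaplacian

section LeviCivita

variable {n : ℕ} {S A : 𝕄 n}

theorem connMatrix_E_mulVec_E (hS : S *ᵥ E n 0 = 0) (hA : A *ᵥ E n 0 = 0) (i : Fin (2 * n)) :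
    connMatrix S A (E n i) *ᵥ E n i = S i i • E n 0 := by
  have hSii : (S *ᵥ E n i) ⬝ᵥ E n i = S i i := by
    rw [dotProduct_E, E_val_eq_single, mulVec_single_one, col_apply]
  rw [connMatrix, add_mulVec, smul_mulVec, wedge_mulVec, hSii, dotProduct_comm (E n 0),
    E_dotProduct_E_zero]
  split_ifs with h
  · rw [show E n i = E n 0 from congrArg (E n) h, hS, hA]
    simp
  · simp

theorem connMatrix_smul_E_zero (hn : 0 < n) (hS : S *ᵥ E n 0 = 0) (c : ℝ) :
    connMatrix S A (c • E n 0) = c • A := by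
  simp [connMatrix, wedge, mulVec_smul, E_dotProduct_E_self (show 0 < 2 * n by omega), hS]

theorem roughLap_connMatrix (hn : 0 < n) (hS : S *ᵥ E n 0 = 0) (hA : A *ᵥ E n 0 = 0)
    (htr : trace S = 0) (x : G n) :
    roughLap (fun y x => connMatrix S A y *ᵥ x) x
      = (∑ i : Fin (2 * n), ⁅connMatrix S A (E n i), ⁅connMatrix S A (E n i), Jm n⁆⁆) *ᵥ x := by
  rw [roughLap_mulVec]
  simp only [connMatrix_E_mulVec_E hS hA, connMatrix_smul_E_zero hn hS, smul_lie,
    Finset.sum_sub_distrib, ← Finset.sum_smul]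
  rw [trace, Finset.sum_congr rfl fun i _ => diag_apply S i] at htr
  rw [htr, zero_smul, sub_zero]

end LeviCivita

section HarmonicityDefect

variable {n : ℕ}

def jWedge : G n →ₗ[ℝ] 𝕄 n where
  toFun v := wedge v (E n 1) + wedge (Jm n *ᵥ v) (E n 0)
  map_add' u v := by
    simp only [wedge, mulVec_add, add_vecMulVec, vecMulVec_add]
    abel
  map_smul' c v := by
    simp only [wedge, mulVec_smul, smul_vecMulVec, vecMulVec_smul, RingHom.id_apply, smul_add,
      smul_sub]

theorem jWedge_mulVec (v x : G n) :
    jWedge v *ᵥ x = (E n 1 ⬝ᵥ x) • v - (v ⬝ᵥ x) • E n 1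
      + (E n 0 ⬝ᵥ x) • (Jm n *ᵥ v) - ((Jm n *ᵥ v) ⬝ᵥ x) • E n 0 := by
  simp only [jWedge, LinearMap.coe_mk, AddHom.coe_mk, add_mulVec, wedge_mulVec]
  abel

theorem lie_wedge_E_zero (s : G n) :
    ⁅wedge (E n 0) s * Jm n * wedge (E n 0) s, Jm n⁆ = (s ⬝ᵥ E n 1) • jWedge s := by
  refine ext_iff_mulVec.mpr fun x => ?_
  simp only [Ring.lie_def, sub_mulVec, smul_mulVec, ← mulVec_mulVec, wedge_mulVec, jWedge_mulVec,
    mulVec_sub, mulVec_smul, Jm_mulVec_E_zero, Jm_mulVec_dotProduct, E_zero_dotProduct_Jm_mulVec,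
    dotProduct_Jm_mulVec_self, E_zero_dotProduct_E_one]
  rw [dotProduct_comm (E n 1) s]
  module

variable {S A : 𝕄 n}

theorem lie_connMatrix_E (hS : S *ᵥ E n 0 = 0) (i : Fin (2 * n)) :
    ⁅connMatrix S A (E n i) * Jm n * connMatrix S A (E n i), Jm n⁆
      = (E n i ⬝ᵥ E n 0) • ⁅A * Jm n * A, Jm n⁆
        + ⁅wedge (E n 0) (S *ᵥ E n i) * Jm n * wedge (E n 0) (S *ᵥ E n i), Jm n⁆ := by
  rw [connMatrix, E_dotProduct_E_zero]
  split_ifs with h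
  · rw [show E n i = E n 0 from congrArg (E n) h, hS]
    simp [wedge]
  · simp

theorem sum_dotProduct_smul_mulVec_E (S : 𝕄 n) (a : G n) :
    ∑ i : Fin (2 * n), ((S *ᵥ E n i) ⬝ᵥ a) • (S *ᵥ E n i) = S *ᵥ (Sᵀ *ᵥ a) := by
  have h (i : Fin (2 * n)) : (S *ᵥ E n i) ⬝ᵥ a = (Sᵀ *ᵥ a) ⬝ᵥ E n i := by
    rw [dotProduct_comm, dotProduct_mulVec, mulVec_transpose]
  simp only [h, ← mulVec_smul, ← mulVec_sum, sum_dotProduct_E_smul_E]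

theorem sum_lie_connMatrix (hn : 0 < n) (hS : S *ᵥ E n 0 = 0) :
    ∑ i : Fin (2 * n), ⁅connMatrix S A (E n i) * Jm n * connMatrix S A (E n i), Jm n⁆
      = ⁅A * Jm n * A, Jm n⁆ + jWedge (S *ᵥ (Sᵀ *ᵥ E n 1)) := by
  simp only [lie_connMatrix_E hS, lie_wedge_E_zero, Finset.sum_add_distrib, ← Finset.sum_smul,
    sum_E_dotProduct_E_zero hn, one_smul, ← map_smul, ← map_sum, sum_dotProduct_smul_mulVec_E]

theorem harmonic_connMatrix_iff (hn : 0 < n) (hSt : Sᵀ = S) (hS : S *ᵥ E n 0 = 0)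
    (hA : A *ᵥ E n 0 = 0) (htr : trace S = 0) :
    Harmonic (fun y x => connMatrix S A y *ᵥ x)
      ↔ ⁅A * Jm n * A, Jm n⁆ + jWedge (S *ᵥ (S *ᵥ E n 1)) = 0 := by
  rw [harmonic_iff_lie_eq_zero (roughLap_connMatrix hn hS hA htr), lie_sum]
  simp only [lie_lie_lie_of_mul_self_eq_neg_one Jm_mul_Jm, ← Finset.smul_sum,
    sum_lie_connMatrix hn hS, hSt, ← Nat.cast_smul_eq_nsmul ℝ]
  exact smul_eq_zero_iff_right two_ne_zero

theorem jWedge_E_one : jWedge (E n 1) = 0 := by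
  simp [jWedge, wedge, Jm_mulVec_E_one]

theorem DinA.lie_mulVec_E {M : 𝕄 n} (hM : DinA M) {j : ℕ}
    (hj : j < 2) : ⁅M * Jm n * M, Jm n⁆ *ᵥ E n j = 0 := by
  obtain rfl | rfl : j = 0 ∨ j = 1 := by omega
  all_goals simp [Ring.lie_def, sub_mulVec, ← mulVec_mulVec, Jm_mulVec_E_zero, Jm_mulVec_E_one,
    mulVec_neg, hM.mulVec_E Nat.zero_lt_two, hM.mulVec_E Nat.one_lt_two]

theorem add_jWedge_eq_zero_iff (hn : 0 < n) {M : 𝕄 n}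
    (hM0 : M *ᵥ E n 0 = 0) (hM1 : M *ᵥ E n 1 = 0) {c : G n} (hc : inA c) :
    M + jWedge c = 0 ↔ c = 0 ∧ ∀ x, inA x → M *ᵥ x = 0 := by
  constructor
  · intro h
    obtain rfl : c = 0 := by
      have h1 := congrArg (· *ᵥ E n 1) h
      simpa [add_mulVec, hM1, jWedge_mulVec, E_dotProduct_E_self (show 1 < 2 * n by omega),
        hc.dotProduct_E, E_zero_dotProduct_E_one, Jm_mulVec_dotProduct, Jm_mulVec_E_one] using h1
    rw [map_zero, add_zero] at h
    exact ⟨rfl, fun x _ => by rw [h, zero_mulVec]⟩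
  · rintro ⟨rfl, hM⟩
    rw [map_zero, add_zero]
    refine ext_iff_mulVec.mpr fun x => ?_
    have hx : inA (x - (x ⬝ᵥ E n 0) • E n 0 - (x ⬝ᵥ E n 1) • E n 1) := by
      simp [inA_iff, E_dotProduct_E_self (show 0 < 2 * n by omega),
        E_dotProduct_E_self (show 1 < 2 * n by omega), E_zero_dotProduct_E_one,
        E_one_dotProduct_E_zero]
    simpa [mulVec_sub, mulVec_smul, hM0, hM1] using hM _ hx

end HarmonicityDefect

section AlmostAbelian

variable {n : ℕ} {μ : ℝ} {v₀ w₀ : G n} {D : 𝕄 n}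

theorem symPart_Lm : symPart (Lm μ v₀ w₀ D)
    = μ • vecMulVec (E n 1) (E n 1) + vecMulVec (gam v₀ w₀) (E n 1)
      + vecMulVec (E n 1) (gam v₀ w₀) + symPart D := by
  ext k l
  simp only [symPart, Lm, gam, Matrix.add_apply, Matrix.smul_apply, transpose_apply, of_apply,
    vecMulVec_apply, E, Pi.smul_apply, Pi.add_apply, smul_eq_mul]
  split_ifs <;> first | ring1 | omega

theorem skewPart_Lm : skewPart (Lm μ v₀ w₀ D) = wedge (rho v₀ w₀) (E n 1) + skewPart D := by
  ext k l
  simp only [skewPart, wedge, Lm, rho, Matrix.add_apply, Matrix.sub_apply, Matrix.smul_apply,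
    transpose_apply, of_apply, vecMulVec_apply, E, Pi.smul_apply, Pi.sub_apply, smul_eq_mul]
  split_ifs <;> first | ring1 | omega

theorem symPart_Lm_mulVec (x : G n) : symPart (Lm μ v₀ w₀ D) *ᵥ x
    = (μ * (E n 1 ⬝ᵥ x)) • E n 1 + (E n 1 ⬝ᵥ x) • gam v₀ w₀ + (gam v₀ w₀ ⬝ᵥ x) • E n 1
      + symPart D *ᵥ x := by
  simp only [symPart_Lm, add_mulVec, smul_mulVec, vecMulVec_mulVec_eq_smul, smul_smul]

theorem symPart_Lm_mulVec_E_zero (hγ : inA (gam v₀ w₀)) (hD : DinA D) :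
    symPart (Lm μ v₀ w₀ D) *ᵥ E n 0 = 0 := by
  simp [symPart_Lm_mulVec, E_one_dotProduct_E_zero, hγ.dotProduct_E Nat.zero_lt_two,
    hD.symPart.mulVec_E Nat.zero_lt_two]

theorem skewPart_Lm_mulVec_E_zero (hρ : inA (rho v₀ w₀)) (hD : DinA D) :
    skewPart (Lm μ v₀ w₀ D) *ᵥ E n 0 = 0 := by
  simp [skewPart_Lm, add_mulVec, wedge_mulVec, E_one_dotProduct_E_zero,
    hρ.dotProduct_E Nat.zero_lt_two, hD.skewPart.mulVec_E Nat.zero_lt_two]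

theorem trace_symPart_Lm (hn : 0 < n) (hγ : inA (gam v₀ w₀)) :
    trace (symPart (Lm μ v₀ w₀ D)) = μ + trace D := by
  simp [symPart_Lm, trace_add, trace_smul, E_dotProduct_E_self (show 1 < 2 * n by omega),
    hγ.E_dotProduct Nat.one_lt_two,
    hγ.dotProduct_E Nat.one_lt_two, trace_symPart]

theorem symPart_Lm_mulVec_symPart_Lm_mulVec_E_one (hn : 0 < n) (hγ : inA (gam v₀ w₀))
    (hD : DinA D) :
    symPart (Lm μ v₀ w₀ D) *ᵥ (symPart (Lm μ v₀ w₀ D) *ᵥ E n 1)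
      = (μ * μ + gam v₀ w₀ ⬝ᵥ gam v₀ w₀) • E n 1 + (μ • gam v₀ w₀ + symPart D *ᵥ gam v₀ w₀) := by
  have h11 := E_dotProduct_E_self (show 1 < 2 * n by omega)
  have hSe : symPart (Lm μ v₀ w₀ D) *ᵥ E n 1 = μ • E n 1 + gam v₀ w₀ := by
    rw [symPart_Lm_mulVec, h11, hγ.dotProduct_E Nat.one_lt_two, hD.symPart.mulVec_E Nat.one_lt_two]
    module
  rw [hSe, mulVec_add, mulVec_smul, hSe, symPart_Lm_mulVec, hγ.E_dotProduct Nat.one_lt_two]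
  module

theorem lie_skewPart_Lm (hρ : inA (rho v₀ w₀)) (hD : DinA D) :
    ⁅skewPart (Lm μ v₀ w₀ D) * Jm n * skewPart (Lm μ v₀ w₀ D), Jm n⁆
      = ⁅skewPart D * Jm n * skewPart D, Jm n⁆
        - jWedge (Jm n *ᵥ (skewPart D *ᵥ (Jm n *ᵥ rho v₀ w₀))) := by
  refine ext_iff_mulVec.mpr fun x => ?_
  simp only [skewPart_Lm, Ring.lie_def, sub_mulVec, add_mulVec, ← mulVec_mulVec, wedge_mulVec,
    jWedge_mulVec, mulVec_add, mulVec_sub, mulVec_smul, mulVec_neg, mulVec_zero,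
    Jm_mulVec_Jm_mulVec, Jm_mulVec_E_one, hD.skewPart.mulVec_E Nat.zero_lt_two,
    neg_dotProduct, Jm_mulVec_dotProduct,
    mulVec_dotProduct_of_transpose_eq_neg (skewPart_transpose D),
    E_one_dotProduct_Jm_mulVec, hD.skewPart.E_dotProduct_mulVec Nat.zero_lt_two,
    dotProduct_Jm_mulVec_self, hρ.dotProduct_E Nat.zero_lt_two,
    hρ.E_dotProduct Nat.zero_lt_two, E_one_dotProduct_E_zero]
  module

theorem lie_add_jWedge_Lm (hn : 0 < n) (hv : inA v₀) (hw : inA w₀) (hD : DinA D) :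
    ⁅skewPart (Lm μ v₀ w₀ D) * Jm n * skewPart (Lm μ v₀ w₀ D), Jm n⁆
        + jWedge (symPart (Lm μ v₀ w₀ D) *ᵥ (symPart (Lm μ v₀ w₀ D) *ᵥ E n 1))
      = ⁅skewPart D * Jm n * skewPart D, Jm n⁆
        + jWedge (μ • gam v₀ w₀ + symPart D *ᵥ gam v₀ w₀
          - Jm n *ᵥ (skewPart D *ᵥ (Jm n *ᵥ rho v₀ w₀))) := by
  rw [lie_skewPart_Lm (inA_rho hv hw) hD,
    symPart_Lm_mulVec_symPart_Lm_mulVec_E_one hn (inA_gam hv hw) hD, map_add, map_smul,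
    jWedge_E_one, smul_zero, zero_add, map_sub]
  abel

end AlmostAbelian

/-- Corollary 3.4: if `g` is unimodular (`μ + Tr D = 0`), then `J` is
harmonic iff (i) `μγ + D_s γ − J' D_a J' ρ = 0` and (ii) `D_a J' D_a J' = J' D_a J' D_a`
as endomorphisms of `a`. -/
theorem statement2 (n : ℕ) (hn : 2 ≤ n) (μ : ℝ) (v₀ w₀ : G n) (hv : inA v₀) (hw : inA w₀)
    (D : Matrix (Fin (2*n)) (Fin (2*n)) ℝ) (hD : DinA D)
    (huni : μ + Matrix.trace D = 0)
    (nabla : G n → G n → G n) (hK : Koszul (Lm μ v₀ w₀ D) nabla) :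
    Harmonic nabla ↔
      ((μ • gam v₀ w₀ + (symPart D).mulVec (gam v₀ w₀)
          - (Jm n).mulVec ((skewPart D).mulVec ((Jm n).mulVec (rho v₀ w₀))) = 0)
        ∧ (∀ x : G n, inA x →
            (skewPart D * Jm n * skewPart D * Jm n).mulVec x
              = (Jm n * skewPart D * Jm n * skewPart D).mulVec x)) := by
  have hn' : 0 < n := by omega
  have hγ := inA_gam hv hw
  have hρ := inA_rho hv hw
  have hc : inA (μ • gam v₀ w₀ + symPart D *ᵥ gam v₀ w₀
      - Jm n *ᵥ (skewPart D *ᵥ (Jm n *ᵥ rho v₀ w₀))) :=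
    ((hγ.smul μ).add (hD.symPart.inA_mulVec _)).sub (hD.skewPart.inA_mulVec _).Jm_mulVec
  obtain rfl := hK.eq_connMatrix
  rw [harmonic_connMatrix_iff hn' (symPart_transpose _) (symPart_Lm_mulVec_E_zero hγ hD)
      (skewPart_Lm_mulVec_E_zero hρ hD) (by rw [trace_symPart_Lm hn' hγ, huni]),
    lie_add_jWedge_Lm hn' hv hw hD,
    add_jWedge_eq_zero_iff hn' (hD.skewPart.lie_mulVec_E (by norm_num))
      (hD.skewPart.lie_mulVec_E (by norm_num)) hc]
  simp only [Ring.lie_def, sub_mulVec, sub_eq_zero, Matrix.mul_assoc]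
end
end

section
/- Assume J is integrable, i.e. w₀ = 0 and D∘J' = J'∘D. Then J is harmonic if and only if Dv₀ = (Tr D)·v₀. -/
open scoped BigOperators
open Matrix

noncomputable section

/-!
Writing `∇_y` as a matrix, `∇_y = ⟨y, e₀⟩ A + e₀ ∧ S y` with `a ∧ b = a bᵀ - b aᵀ`, the rough
Laplacian of `J` is multiplication by `M = Σᵢ [∇_{eᵢ}, [∇_{eᵢ}, J]] - [∇_{Σᵢ ∇_{eᵢ} eᵢ}, J]`, so `J`
is harmonic iff `[J, M] = 0`. Wedges close under commutators (the bracket of `so(2n)`), and when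
`L` kills `e₀` and preserves `u` this reduces `[J, M]` to
`[J, [A, [A, J]]] - 2 Z(S² e₁) - tr S · [J, [A, J]]`,
where `Z w = [J, e₀ ∧ w]` (`adJWedge`). For integrable `J` we have `A = ½ v₀ ∧ e₁ + D_skew`
with `D_skew` commuting with `J`, and every term becomes a multiple of some `Z w`; together they give
`Z (tr D · v₀ - D v₀)`. Finally `Z w e₁ = -w` for `w ∈ a`, so `Z w = 0` only for `w = 0`.
-/

namespace AlmostAbelian

open Matrix

-- Mathlib only puts the bare commutator bracket on matrices; these give it the Lie ring API.
attribute [local instance] LieRing.ofAssociativeRing LieAlgebra.ofAssociativeAlgebra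

section Wedge

variable {m R : Type*} [CommRing R]

def wedge : (m → R) →ₗ[R] (m → R) →ₗ[R] Matrix m m R :=
  LinearMap.mk₂ R (fun a b => vecMulVec a b - vecMulVec b a)
    (fun _ _ _ => by simp only [add_vecMulVec, vecMulVec_add]; abel)
    (fun _ _ _ => by simp only [smul_vecMulVec, vecMulVec_smul, smul_sub])
    (fun _ _ _ => by simp only [add_vecMulVec, vecMulVec_add]; abel)
    (fun _ _ _ => by simp only [smul_vecMulVec, vecMulVec_smul, smul_sub])

lemma wedge_apply (a b : m → R) : wedge a b = vecMulVec a b - vecMulVec b a := rfl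

lemma wedge_comm (a b : m → R) : wedge b a = -wedge a b := by
  simp only [wedge_apply, neg_sub]

@[simp]
lemma wedge_self (a : m → R) : wedge a a = 0 := sub_self _

variable [Fintype m]

lemma wedge_mulVec (a b x : m → R) : wedge a b *ᵥ x = (b ⬝ᵥ x) • a - (a ⬝ᵥ x) • b := by
  simp only [wedge_apply, sub_mulVec, vecMulVec_mulVec, op_smul_eq_smul]

lemma lie_wedge_wedge (a b c d : m → R) :
    ⁅wedge a b, wedge c d⁆ = (b ⬝ᵥ c) • wedge a d - (b ⬝ᵥ d) • wedge a c
      - (a ⬝ᵥ c) • wedge b d + (a ⬝ᵥ d) • wedge b c := by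
  simp only [Ring.lie_def, wedge_apply, Matrix.sub_mul, Matrix.mul_sub,
    vecMulVec_mul_vecMulVec, vecMulVec_smul, smul_sub, dotProduct_comm a c, dotProduct_comm b c,
    dotProduct_comm a d, dotProduct_comm b d]
  abel

lemma lie_wedge_of_transpose_eq_neg {M : Matrix m m R} (hM : Mᵀ = -M) (a b : m → R) :
    ⁅M, wedge a b⁆ = wedge (M *ᵥ a) b + wedge a (M *ᵥ b) := by
  have hvec : ∀ x : m → R, x ᵥ* M = -(M *ᵥ x) := fun x => by
    rw [← mulVec_transpose, hM, neg_mulVec]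
  simp only [Ring.lie_def, wedge_apply, Matrix.sub_mul, Matrix.mul_sub, mul_vecMulVec,
    vecMulVec_mul, hvec, vecMulVec_neg]
  abel

end Wedge

variable {n : ℕ}

lemma E_eq_single {k : ℕ} (hk : k < 2 * n) : E n k = Pi.single ⟨k, hk⟩ 1 := by
  ext i
  simp [E, Pi.single_apply, Fin.ext_iff]

lemma E_val (i : Fin (2 * n)) : E n i = Pi.single i 1 := E_eq_single i.isLt

lemma E_dotProduct_E {k l : ℕ} (hk : k < 2 * n) (hl : l < 2 * n) :
    E n k ⬝ᵥ E n l = if k = l then 1 else 0 := by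
  simp [E_eq_single hk, E_eq_single hl, Pi.single_apply, eq_comm]

lemma E_zero_dotProduct_E_zero (hn : 0 < n) : E n 0 ⬝ᵥ E n 0 = 1 := by
  simp [E_dotProduct_E (k := 0) (l := 0) (n := n) (by omega) (by omega)]

lemma E_one_dotProduct_E_one (hn : 0 < n) : E n 1 ⬝ᵥ E n 1 = 1 := by
  simp [E_dotProduct_E (k := 1) (l := 1) (n := n) (by omega) (by omega)]

lemma E_zero_dotProduct_E_one (hn : 0 < n) : E n 0 ⬝ᵥ E n 1 = 0 := by
  simp [E_dotProduct_E (k := 0) (l := 1) (n := n) (by omega) (by omega)]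

lemma E_one_dotProduct_E_zero (hn : 0 < n) : E n 1 ⬝ᵥ E n 0 = 0 := by
  simp [E_dotProduct_E (k := 1) (l := 0) (n := n) (by omega) (by omega)]

lemma Jm_mulVec_E_of_even {j : ℕ} (hj : j < 2 * n) (he : Even j) :
    Jm n *ᵥ E n j = E n (j + 1) := by
  ext k
  rw [E_eq_single hj, mulVec_single_one]
  simp only [col_apply, Jm, of_apply, E]
  grind

lemma Jm_mulVec_E_of_odd {j : ℕ} (hj : j < 2 * n) (ho : ¬Even j) :
    Jm n *ᵥ E n j = -E n (j - 1) := by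
  ext k
  rw [E_eq_single hj, mulVec_single_one]
  simp only [col_apply, Jm, of_apply, E, Pi.neg_apply]
  grind

lemma Jm_transpose : (Jm n)ᵀ = -Jm n := by
  ext k l
  simp only [transpose_apply, Matrix.neg_apply, Jm, of_apply]
  grind

lemma Jm_mul_Jm : Jm n * Jm n = -1 := by
  refine ext_of_mulVec_single fun j => ?_
  rw [← mulVec_mulVec, neg_mulVec, one_mulVec, ← E_val]
  by_cases he : Even (j : ℕ)
  · have hj : (j : ℕ) + 1 < 2 * n := by grind
    rw [Jm_mulVec_E_of_even j.isLt he, Jm_mulVec_E_of_odd hj (by grind), Nat.add_sub_cancel]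
  · rw [Jm_mulVec_E_of_odd j.isLt he, mulVec_neg, Jm_mulVec_E_of_even (by omega) (by grind),
      Nat.sub_add_cancel (by grind)]

lemma Jm_mulVec_E_zero (hn : 0 < n) : Jm n *ᵥ E n 0 = E n 1 :=
  Jm_mulVec_E_of_even (by omega) Even.zero

lemma Jm_mulVec_E_one (hn : 0 < n) : Jm n *ᵥ E n 1 = -E n 0 :=
  Jm_mulVec_E_of_odd (by omega) Nat.not_even_one

lemma Jm_mulVec_Jm_mulVec (x : G n) : Jm n *ᵥ (Jm n *ᵥ x) = -x := by
  rw [mulVec_mulVec, Jm_mul_Jm, neg_mulVec, one_mulVec]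

lemma dotProduct_Jm_mulVec (x y : G n) : x ⬝ᵥ (Jm n *ᵥ y) = -((Jm n *ᵥ x) ⬝ᵥ y) := by
  rw [dotProduct_mulVec, ← mulVec_transpose, Jm_transpose, neg_mulVec, neg_dotProduct,
    dotProduct_comm]

lemma dotProduct_Jm_mulVec_self (x : G n) : x ⬝ᵥ (Jm n *ᵥ x) = 0 := by
  have h := dotProduct_Jm_mulVec x x
  rw [dotProduct_comm (Jm n *ᵥ x)] at h
  linarith

lemma lie_Jm_wedge (a b : G n) :
    ⁅Jm n, wedge a b⁆ = wedge (Jm n *ᵥ a) b + wedge a (Jm n *ᵥ b) :=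
  lie_wedge_of_transpose_eq_neg Jm_transpose a b

lemma lie_Jm_wedge_Jm_mulVec (w : G n) : ⁅Jm n, wedge w (Jm n *ᵥ w)⁆ = 0 := by
  rw [lie_Jm_wedge, Jm_mulVec_Jm_mulVec, map_neg, wedge_self, wedge_self, zero_add, neg_zero]

def adJWedge (n : ℕ) : G n →ₗ[ℝ] Matrix (Fin (2 * n)) (Fin (2 * n)) ℝ :=
  LieAlgebra.ad ℝ _ (Jm n) ∘ₗ wedge (E n 0)

lemma adJWedge_apply (w : G n) : adJWedge n w = ⁅Jm n, wedge (E n 0) w⁆ := rfl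

lemma adJWedge_eq (hn : 0 < n) (w : G n) :
    adJWedge n w = wedge (E n 1) w + wedge (E n 0) (Jm n *ᵥ w) := by
  rw [adJWedge_apply, lie_Jm_wedge, Jm_mulVec_E_zero hn]

lemma adJWedge_E_one (hn : 0 < n) : adJWedge n (E n 1) = 0 := by
  rw [adJWedge_eq hn, Jm_mulVec_E_one hn, map_neg, wedge_self, wedge_comm, neg_neg, wedge_self,
    add_zero]

lemma lie_Jm_adJWedge (hn : 0 < n) (w : G n) :
    ⁅Jm n, adJWedge n w⁆ = (2 : ℝ) • adJWedge n (Jm n *ᵥ w) := by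
  rw [adJWedge_eq hn, adJWedge_eq hn, lie_add, lie_Jm_wedge, lie_Jm_wedge, Jm_mulVec_E_zero hn,
    Jm_mulVec_E_one hn, Jm_mulVec_Jm_mulVec, map_neg, map_neg, LinearMap.neg_apply]
  module

lemma lie_adJWedge_of_commute {C : Matrix (Fin (2 * n)) (Fin (2 * n)) ℝ} (hn : 0 < n)
    (hCT : Cᵀ = -C) (hC0 : C *ᵥ E n 0 = 0) (hC1 : C *ᵥ E n 1 = 0) (hCJ : C * Jm n = Jm n * C)
    (w : G n) : ⁅C, adJWedge n w⁆ = adJWedge n (C *ᵥ w) := by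
  rw [adJWedge_eq hn, adJWedge_eq hn, lie_add, lie_wedge_of_transpose_eq_neg hCT,
    lie_wedge_of_transpose_eq_neg hCT, hC0, hC1, mulVec_mulVec, hCJ, ← mulVec_mulVec]
  simp only [map_zero, LinearMap.zero_apply, zero_add]

lemma adJWedge_mulVec_E_one (hn : 0 < n) (w : G n) :
    adJWedge n w *ᵥ E n 1 = (w ⬝ᵥ E n 1) • E n 1 + (w ⬝ᵥ E n 0) • E n 0 - w := by
  rw [adJWedge_eq hn, add_mulVec, wedge_mulVec, wedge_mulVec, dotProduct_comm (Jm n *ᵥ w),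
    dotProduct_Jm_mulVec, Jm_mulVec_E_one hn, neg_dotProduct, neg_neg,
    E_zero_dotProduct_E_one hn, E_one_dotProduct_E_one hn, zero_smul, one_smul,
    dotProduct_comm (E n 0)]
  abel

lemma adJWedge_eq_zero_iff (hn : 0 < n) {w : G n} (hw0 : w ⬝ᵥ E n 0 = 0)
    (hw1 : w ⬝ᵥ E n 1 = 0) : adJWedge n w = 0 ↔ w = 0 := by
  refine ⟨fun h => ?_, fun h => h ▸ map_zero _⟩
  have := adJWedge_mulVec_E_one hn w
  rwa [h, zero_mulVec, hw0, hw1, zero_smul, zero_smul, zero_add, zero_sub, zero_eq_neg] at this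

lemma lie_wedge_lie_wedge_Jm (hn : 0 < n) {s : G n} (hs : s ⬝ᵥ E n 0 = 0) :
    ⁅wedge (E n 0) s, ⁅wedge (E n 0) s, Jm n⁆⁆ = (s ⬝ᵥ s) • wedge (E n 0) (E n 1)
      - (2 * (s ⬝ᵥ E n 1)) • wedge (E n 0) s + wedge s (Jm n *ᵥ s) := by
  have hJs : E n 0 ⬝ᵥ (Jm n *ᵥ s) = -(s ⬝ᵥ E n 1) := by
    rw [dotProduct_Jm_mulVec, Jm_mulVec_E_zero hn, dotProduct_comm]
  rw [← lie_skew (wedge (E n 0) s) (Jm n), ← adJWedge_apply, adJWedge_eq hn, lie_neg, lie_add,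
    lie_wedge_wedge, lie_wedge_wedge, dotProduct_comm (E n 0) s, hs, hJs,
    E_zero_dotProduct_E_zero hn, E_zero_dotProduct_E_one hn, dotProduct_Jm_mulVec_self,
    wedge_self, wedge_comm (E n 0) s]
  module

lemma lie_Jm_lie_wedge_lie_wedge_Jm (hn : 0 < n) {s : G n} (hs : s ⬝ᵥ E n 0 = 0) :
    ⁅Jm n, ⁅wedge (E n 0) s, ⁅wedge (E n 0) s, Jm n⁆⁆⁆
      = -(2 * (s ⬝ᵥ E n 1)) • adJWedge n s := by
  rw [lie_wedge_lie_wedge_Jm hn hs, lie_add, lie_sub, lie_smul, lie_smul,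
    lie_Jm_wedge_Jm_mulVec, ← Jm_mulVec_E_zero hn, lie_Jm_wedge_Jm_mulVec, adJWedge_apply]
  module

lemma inn_eq_dotProduct (x y : G n) : inn x y = x ⬝ᵥ y := rfl

def connMatrix (L : Matrix (Fin (2 * n)) (Fin (2 * n)) ℝ) :
    G n →ₗ[ℝ] Matrix (Fin (2 * n)) (Fin (2 * n)) ℝ where
  toFun y := (y ⬝ᵥ E n 0) • skewPart L + wedge (E n 0) (symPart L *ᵥ y)
  map_add' x y := by simp only [add_dotProduct, add_smul, mulVec_add, map_add]; abel
  map_smul' c y := by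
    simp only [smul_dotProduct, smul_eq_mul, mul_smul, mulVec_smul, map_smul, RingHom.id_apply,
      smul_add]

lemma connMatrix_apply (L : Matrix (Fin (2 * n)) (Fin (2 * n)) ℝ) (y : G n) :
    connMatrix L y = (y ⬝ᵥ E n 0) • skewPart L + wedge (E n 0) (symPart L *ᵥ y) := rfl

lemma nabla_eq_connMatrix_mulVec {L : Matrix (Fin (2 * n)) (Fin (2 * n)) ℝ}
    {nabla : G n → G n → G n} (hK : Koszul L nabla) (y x : G n) :
    nabla y x = connMatrix L y *ᵥ x := by
  ext j
  have hj := hK y x (E n j)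
  have hcol : ∀ z : G n, (L *ᵥ Pi.single j 1) ⬝ᵥ z = (z ᵥ* L) j := fun z => by
    rw [mulVec_single_one, dotProduct_comm, vecMul, dotProduct]; rfl
  simp only [inn_eq_dotProduct, br, sub_dotProduct, smul_dotProduct, smul_eq_mul, E_val j,
    dotProduct_single_one, single_one_dotProduct, Pi.sub_apply, Pi.smul_apply, hcol] at hj
  simp only [connMatrix_apply, symPart, skewPart, add_mulVec, smul_mulVec, sub_mulVec,
    wedge_mulVec, mulVec_transpose, Pi.add_apply, Pi.sub_apply, Pi.smul_apply, smul_eq_mul,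
    add_dotProduct, smul_dotProduct, ← dotProduct_mulVec]
  rw [dotProduct_comm (E n 0) x, dotProduct_comm y (L *ᵥ x)]
  linear_combination hj / 2

lemma roughLap_eq_mulVec {nabla : G n → G n → G n}
    (P : G n →ₗ[ℝ] Matrix (Fin (2 * n)) (Fin (2 * n)) ℝ) (hP : ∀ y x, nabla y x = P y *ᵥ x)
    (x : G n) :
    roughLap nabla x = (∑ i : Fin (2 * n), ⁅P (E n i), ⁅P (E n i), Jm n⁆⁆
      - ⁅P (∑ i : Fin (2 * n), P (E n i) *ᵥ E n i), Jm n⁆) *ᵥ x := by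
  have hcov : ∀ y z, covJ nabla y z = ⁅P y, Jm n⁆ *ᵥ z := fun y z => by
    rw [covJ, hP, hP, Ring.lie_def, sub_mulVec, mulVec_mulVec, mulVec_mulVec]
  simp only [roughLap, hcov, hP, map_sum, sum_lie, sub_mulVec, sum_mulVec,
    ← Finset.sum_sub_distrib]
  refine Finset.sum_congr rfl fun i _ => ?_
  simp only [Ring.lie_def, Matrix.mul_sub, Matrix.sub_mul, Matrix.mul_assoc, sub_mulVec,
    mulVec_sub, mulVec_mulVec]

lemma harmonic_iff_lie_eq_zero {nabla : G n → G n → G n}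
    {M : Matrix (Fin (2 * n)) (Fin (2 * n)) ℝ} (h : ∀ x, roughLap nabla x = M *ᵥ x) :
    Harmonic nabla ↔ ⁅Jm n, M⁆ = 0 := by
  simp only [Harmonic, h, mulVec_mulVec, Ring.lie_def, sub_eq_zero, ext_iff_mulVec]

lemma sum_mulVec_E_dotProduct_smul (M : Matrix (Fin (2 * n)) (Fin (2 * n)) ℝ) (v : G n) :
    ∑ i : Fin (2 * n), ((M *ᵥ E n i) ⬝ᵥ v) • (M *ᵥ E n i) = M *ᵥ (Mᵀ *ᵥ v) := by
  simp only [E_val, mulVec_single_one]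
  ext k
  simp [Finset.sum_apply, mulVec, dotProduct, Finset.mul_sum, Finset.sum_mul]
  exact Finset.sum_congr rfl fun _ _ => Finset.sum_congr rfl fun _ _ => by ring

lemma symPart_transpose (M : Matrix (Fin (2 * n)) (Fin (2 * n)) ℝ) :
    (symPart M)ᵀ = symPart M := by
  rw [symPart, transpose_smul, transpose_add, transpose_transpose, add_comm]

lemma skewPart_transpose (M : Matrix (Fin (2 * n)) (Fin (2 * n)) ℝ) :
    (skewPart M)ᵀ = -skewPart M := by
  rw [skewPart, transpose_smul, transpose_sub, transpose_transpose, ← smul_neg, neg_sub]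

lemma trace_symPart (M : Matrix (Fin (2 * n)) (Fin (2 * n)) ℝ) :
    trace (symPart M) = trace M := by
  rw [symPart, trace_smul, trace_add, trace_transpose, smul_eq_mul]
  ring

lemma symPart_add_skewPart (M : Matrix (Fin (2 * n)) (Fin (2 * n)) ℝ) :
    symPart M + skewPart M = M := by
  rw [symPart, skewPart]
  module

section UInvariant

variable {L : Matrix (Fin (2 * n)) (Fin (2 * n)) ℝ}

lemma symPart_mulVec_E_zero (hL : L *ᵥ E n 0 = 0) (hLT : E n 0 ᵥ* L = 0) :
    symPart L *ᵥ E n 0 = 0 := by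
  rw [symPart, smul_mulVec, add_mulVec, mulVec_transpose, hL, hLT, add_zero, smul_zero]

lemma skewPart_mulVec_E_zero (hL : L *ᵥ E n 0 = 0) (hLT : E n 0 ᵥ* L = 0) :
    skewPart L *ᵥ E n 0 = 0 := by
  rw [skewPart, smul_mulVec, sub_mulVec, mulVec_transpose, hL, hLT, sub_zero, smul_zero]

lemma connMatrix_E_zero (hn : 0 < n) (hL : L *ᵥ E n 0 = 0) (hLT : E n 0 ᵥ* L = 0) :
    connMatrix L (E n 0) = skewPart L := by
  rw [connMatrix_apply, E_zero_dotProduct_E_zero hn, symPart_mulVec_E_zero hL hLT, map_zero,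
    one_smul, add_zero]

lemma connMatrix_E_of_ne_zero {i : Fin (2 * n)} (hi : (i : ℕ) ≠ 0) :
    connMatrix L (E n i) = wedge (E n 0) (symPart L *ᵥ E n i) := by
  rw [connMatrix_apply, E_dotProduct_E i.isLt i.pos, if_neg hi, zero_smul, zero_add]

lemma connMatrix_E_mulVec_E (hn : 0 < n) (hL : L *ᵥ E n 0 = 0) (hLT : E n 0 ᵥ* L = 0)
    (i : Fin (2 * n)) :
    connMatrix L (E n i) *ᵥ E n i = ((symPart L *ᵥ E n i) ⬝ᵥ E n i) • E n 0 := by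
  by_cases hi : (i : ℕ) = 0
  · rw [hi, connMatrix_E_zero hn hL hLT, skewPart_mulVec_E_zero hL hLT,
      symPart_mulVec_E_zero hL hLT, zero_dotProduct, zero_smul]
  · rw [connMatrix_E_of_ne_zero hi, wedge_mulVec, E_dotProduct_E (by omega) i.isLt,
      if_neg (Ne.symm hi), zero_smul, sub_zero]

lemma sum_connMatrix_E_mulVec_E (hn : 0 < n) (hL : L *ᵥ E n 0 = 0) (hLT : E n 0 ᵥ* L = 0) :
    ∑ i : Fin (2 * n), connMatrix L (E n i) *ᵥ E n i = trace (symPart L) • E n 0 := by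
  rw [Finset.sum_congr rfl fun i _ => connMatrix_E_mulVec_E hn hL hLT i, ← Finset.sum_smul]
  simp only [E_val, mulVec_single_one, dotProduct_single_one, col_apply, trace, diag]

lemma lie_Jm_lie_connMatrix_E (hn : 0 < n) (hL : L *ᵥ E n 0 = 0) (hLT : E n 0 ᵥ* L = 0)
    (i : Fin (2 * n)) :
    ⁅Jm n, ⁅connMatrix L (E n i), ⁅connMatrix L (E n i), Jm n⁆⁆⁆
      = (if (i : ℕ) = 0 then ⁅Jm n, ⁅skewPart L, ⁅skewPart L, Jm n⁆⁆⁆ else 0)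
        - (2 * ((symPart L *ᵥ E n i) ⬝ᵥ E n 1)) • adJWedge n (symPart L *ᵥ E n i) := by
  by_cases hi : (i : ℕ) = 0
  · rw [if_pos hi, hi, connMatrix_E_zero hn hL hLT, symPart_mulVec_E_zero hL hLT, map_zero,
      smul_zero, sub_zero]
  · have hs : (symPart L *ᵥ E n i) ⬝ᵥ E n 0 = 0 := by
      rw [dotProduct_comm, dotProduct_mulVec, ← mulVec_transpose, symPart_transpose,
        symPart_mulVec_E_zero hL hLT, zero_dotProduct]
    rw [if_neg hi, connMatrix_E_of_ne_zero hi, lie_Jm_lie_wedge_lie_wedge_Jm hn hs, zero_sub,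
      neg_smul]

lemma sum_lie_Jm_lie_connMatrix_E (hn : 0 < n) (hL : L *ᵥ E n 0 = 0) (hLT : E n 0 ᵥ* L = 0) :
    ∑ i : Fin (2 * n), ⁅Jm n, ⁅connMatrix L (E n i), ⁅connMatrix L (E n i), Jm n⁆⁆⁆
      = ⁅Jm n, ⁅skewPart L, ⁅skewPart L, Jm n⁆⁆⁆
        - (2 : ℝ) • adJWedge n (symPart L *ᵥ (symPart L *ᵥ E n 1)) := by
  have hsum : ∑ i : Fin (2 * n), ((symPart L *ᵥ E n i) ⬝ᵥ E n 1) • (symPart L *ᵥ E n i)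
      = symPart L *ᵥ (symPart L *ᵥ E n 1) := by
    rw [sum_mulVec_E_dotProduct_smul, symPart_transpose]
  simp only [lie_Jm_lie_connMatrix_E hn hL hLT, Finset.sum_sub_distrib, mul_smul,
    ← Finset.smul_sum, ← map_smul, ← map_sum, hsum]
  rw [Finset.sum_eq_single_of_mem ⟨0, by omega⟩ (Finset.mem_univ _)
    fun j _ hj => if_neg fun h => hj (Fin.ext h), if_pos rfl]

end UInvariant

theorem harmonic_iff_of_koszul {L : Matrix (Fin (2 * n)) (Fin (2 * n)) ℝ}
    {nabla : G n → G n → G n} (hn : 0 < n) (hL : L *ᵥ E n 0 = 0) (hLT : E n 0 ᵥ* L = 0)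
    (hK : Koszul L nabla) :
    Harmonic nabla ↔ ⁅Jm n, ⁅skewPart L, ⁅skewPart L, Jm n⁆⁆⁆
      - (2 : ℝ) • adJWedge n (symPart L *ᵥ (symPart L *ᵥ E n 1))
      - trace (symPart L) • ⁅Jm n, ⁅skewPart L, Jm n⁆⁆ = 0 := by
  rw [harmonic_iff_lie_eq_zero (roughLap_eq_mulVec _ (nabla_eq_connMatrix_mulVec hK)), lie_sub,
    lie_sum, sum_lie_Jm_lie_connMatrix_E hn hL hLT, sum_connMatrix_E_mulVec_E hn hL hLT, map_smul,
    connMatrix_E_zero hn hL hLT, smul_lie, lie_smul]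

lemma lie_wedge_add_Jm (hn : 0 < n) {C : Matrix (Fin (2 * n)) (Fin (2 * n)) ℝ}
    (hCJ : C * Jm n = Jm n * C) (r : G n) :
    ⁅wedge r (E n 1) + C, Jm n⁆ = adJWedge n (Jm n *ᵥ r) := by
  have hC : ⁅C, Jm n⁆ = 0 := by rw [Ring.lie_def, hCJ, sub_self]
  rw [add_lie, hC, add_zero, ← lie_skew, lie_Jm_wedge, adJWedge_eq hn, Jm_mulVec_E_one hn,
    Jm_mulVec_Jm_mulVec, map_neg, map_neg, wedge_comm (E n 1) (Jm n *ᵥ r),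
    wedge_comm (E n 0) r]
  abel

lemma lie_Jm_lie_wedge_add_Jm (hn : 0 < n) {C : Matrix (Fin (2 * n)) (Fin (2 * n)) ℝ}
    (hCJ : C * Jm n = Jm n * C) (r : G n) :
    ⁅Jm n, ⁅wedge r (E n 1) + C, Jm n⁆⁆ = -(2 : ℝ) • adJWedge n r := by
  rw [lie_wedge_add_Jm hn hCJ, lie_Jm_adJWedge hn, Jm_mulVec_Jm_mulVec, map_neg, smul_neg,
    neg_smul]

lemma lie_Jm_lie_wedge_adJWedge (hn : 0 < n) {r : G n} (hr0 : r ⬝ᵥ E n 0 = 0)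
    (hr1 : r ⬝ᵥ E n 1 = 0) :
    ⁅Jm n, ⁅wedge r (E n 1), adJWedge n (Jm n *ᵥ r)⁆⁆ = 0 := by
  have h1 : E n 1 ⬝ᵥ (Jm n *ᵥ r) = 0 := by
    rw [dotProduct_Jm_mulVec, Jm_mulVec_E_one hn, neg_dotProduct, neg_neg, dotProduct_comm, hr0]
  have h10 : ⁅Jm n, wedge (E n 1) (E n 0)⁆ = 0 := by
    rw [wedge_comm, ← Jm_mulVec_E_zero hn, lie_neg, lie_Jm_wedge_Jm_mulVec, neg_zero]
  rw [adJWedge_eq hn, Jm_mulVec_Jm_mulVec, lie_add, lie_wedge_wedge, lie_wedge_wedge,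
    E_one_dotProduct_E_one hn, E_one_dotProduct_E_zero hn, h1, hr1, dotProduct_Jm_mulVec_self,
    dotProduct_neg, dotProduct_neg, dotProduct_comm (E n 1) r, hr1]
  simp only [hr0, zero_smul, one_smul, neg_zero, sub_zero, add_zero, lie_add, lie_smul, lie_zero,
    lie_Jm_wedge_Jm_mulVec, h10, smul_zero]

lemma lie_Jm_lie_lie_wedge_add_Jm (hn : 0 < n) {r : G n} (hr0 : r ⬝ᵥ E n 0 = 0)
    (hr1 : r ⬝ᵥ E n 1 = 0) {C : Matrix (Fin (2 * n)) (Fin (2 * n)) ℝ} (hCT : Cᵀ = -C)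
    (hC0 : C *ᵥ E n 0 = 0) (hC1 : C *ᵥ E n 1 = 0) (hCJ : C * Jm n = Jm n * C) :
    ⁅Jm n, ⁅wedge r (E n 1) + C, ⁅wedge r (E n 1) + C, Jm n⁆⁆⁆
      = -(2 : ℝ) • adJWedge n (C *ᵥ r) := by
  rw [lie_wedge_add_Jm hn hCJ, add_lie, lie_add, lie_Jm_lie_wedge_adJWedge hn hr0 hr1, zero_add,
    lie_adJWedge_of_commute hn hCT hC0 hC1 hCJ, lie_Jm_adJWedge hn, mulVec_mulVec, ← hCJ,
    ← mulVec_mulVec, Jm_mulVec_Jm_mulVec, mulVec_neg, map_neg, smul_neg, neg_smul]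

lemma dotProduct_E_of_inA {v : G n} (hv : inA v) {k : ℕ} (hk : k < 2) : v ⬝ᵥ E n k = 0 :=
  Finset.sum_eq_zero fun i _ => by
    by_cases hi : (i : ℕ) = k
    · rw [hv i (hi ▸ hk), zero_mul]
    · rw [E, if_neg hi, mul_zero]

lemma mulVec_E_of_DinA {D : Matrix (Fin (2 * n)) (Fin (2 * n)) ℝ} (hD : DinA D) {k : ℕ}
    (hk : k < 2) : D *ᵥ E n k = 0 := by
  ext i
  exact dotProduct_E_of_inA (fun j hj => hD i j (Or.inr hj)) hk

lemma E_vecMul_of_DinA {D : Matrix (Fin (2 * n)) (Fin (2 * n)) ℝ} (hD : DinA D) {k : ℕ}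
    (hk : k < 2) : E n k ᵥ* D = 0 := by
  rw [← mulVec_transpose]
  exact mulVec_E_of_DinA (fun i j h => hD j i h.symm) hk

lemma inA_mulVec_of_DinA {D : Matrix (Fin (2 * n)) (Fin (2 * n)) ℝ} (hD : DinA D) (x : G n) :
    inA (D *ᵥ x) :=
  fun i hi => show D i ⬝ᵥ x = 0 from
    Finset.sum_eq_zero fun j _ => by rw [hD i j (Or.inl hi), zero_mul]

lemma mul_Jm_comm_of_DinA (hn : 0 < n) {D : Matrix (Fin (2 * n)) (Fin (2 * n)) ℝ}
    (hD : DinA D) (hint : ∀ x : G n, inA x → D *ᵥ (Jm n *ᵥ x) = Jm n *ᵥ (D *ᵥ x)) :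
    D * Jm n = Jm n * D := by
  refine ext_of_mulVec_single fun j => ?_
  rw [← mulVec_mulVec, ← mulVec_mulVec, ← E_val]
  obtain hj | hj | hj : (j : ℕ) = 0 ∨ (j : ℕ) = 1 ∨ 2 ≤ (j : ℕ) := by omega
  · rw [hj, Jm_mulVec_E_zero hn, mulVec_E_of_DinA hD one_lt_two,
      mulVec_E_of_DinA hD two_pos, mulVec_zero]
  · rw [hj, Jm_mulVec_E_one hn, mulVec_neg, mulVec_E_of_DinA hD two_pos,
      mulVec_E_of_DinA hD one_lt_two, mulVec_zero, neg_zero]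
  · exact hint _ fun i hi => by rw [E, if_neg (by omega)]

lemma symPart_mulVec_E_of_DinA {D : Matrix (Fin (2 * n)) (Fin (2 * n)) ℝ} (hD : DinA D)
    {k : ℕ} (hk : k < 2) : symPart D *ᵥ E n k = 0 := by
  rw [symPart, smul_mulVec, add_mulVec, mulVec_transpose, mulVec_E_of_DinA hD hk,
    E_vecMul_of_DinA hD hk, add_zero, smul_zero]

lemma skewPart_mulVec_E_of_DinA {D : Matrix (Fin (2 * n)) (Fin (2 * n)) ℝ} (hD : DinA D)
    {k : ℕ} (hk : k < 2) : skewPart D *ᵥ E n k = 0 := by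
  rw [skewPart, smul_mulVec, sub_mulVec, mulVec_transpose, mulVec_E_of_DinA hD hk,
    E_vecMul_of_DinA hD hk, sub_zero, smul_zero]

lemma skewPart_mul_Jm_comm {D : Matrix (Fin (2 * n)) (Fin (2 * n)) ℝ}
    (hDJ : D * Jm n = Jm n * D) : skewPart D * Jm n = Jm n * skewPart D := by
  have hDTJ : Dᵀ * Jm n = Jm n * Dᵀ := by
    simpa [transpose_mul, Jm_transpose] using congrArg transpose hDJ.symm
  simp only [skewPart, smul_mul, Matrix.mul_smul, Matrix.sub_mul, Matrix.mul_sub, hDJ, hDTJ]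

section Lm

variable (μ : ℝ) (v₀ w₀ : G n) (D : Matrix (Fin (2 * n)) (Fin (2 * n)) ℝ)

lemma Lm_eq : Lm μ v₀ w₀ D = μ • vecMulVec (E n 1) (E n 1) + vecMulVec v₀ (E n 1)
    + vecMulVec (E n 1) w₀ + D := by
  ext k l
  simp only [Lm, of_apply, Matrix.add_apply, Matrix.smul_apply, vecMulVec_apply, E, smul_eq_mul]
  split_ifs <;> first | ring1 | (exfalso; omega)

lemma symPart_Lm : symPart (Lm μ v₀ w₀ D) = μ • vecMulVec (E n 1) (E n 1)
    + (vecMulVec (gam v₀ w₀) (E n 1) + vecMulVec (E n 1) (gam v₀ w₀)) + symPart D := by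
  simp only [symPart, Lm_eq, gam, transpose_add, transpose_smul, transpose_vecMulVec,
    add_vecMulVec, vecMulVec_add, smul_vecMulVec, vecMulVec_smul]
  module

lemma skewPart_Lm : skewPart (Lm μ v₀ w₀ D) = wedge (rho v₀ w₀) (E n 1) + skewPart D := by
  simp only [skewPart, Lm_eq, rho, wedge_apply, transpose_add, transpose_smul,
    transpose_vecMulVec, sub_vecMulVec, vecMulVec_sub, smul_vecMulVec, vecMulVec_smul]
  module

variable {μ v₀ w₀ D}

lemma Lm_mulVec_E_zero (hn : 0 < n) (hw : inA w₀) (hD : DinA D) :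
    Lm μ v₀ w₀ D *ᵥ E n 0 = 0 := by
  simp only [Lm_eq, add_mulVec, smul_mulVec, vecMulVec_mulVec, op_smul_eq_smul,
    E_one_dotProduct_E_zero hn, dotProduct_E_of_inA hw two_pos, mulVec_E_of_DinA hD two_pos,
    zero_smul, smul_zero, add_zero]

lemma E_zero_vecMul_Lm (hn : 0 < n) (hv : inA v₀) (hD : DinA D) :
    E n 0 ᵥ* Lm μ v₀ w₀ D = 0 := by
  simp only [Lm_eq, vecMul_add, vecMul_smul, vecMul_vecMulVec, E_zero_dotProduct_E_one hn,
    dotProduct_comm (E n 0) v₀, dotProduct_E_of_inA hv two_pos, E_vecMul_of_DinA hD two_pos,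
    zero_smul, smul_zero, add_zero]

lemma gam_dotProduct_E_one (hv : inA v₀) (hw : inA w₀) : gam v₀ w₀ ⬝ᵥ E n 1 = 0 := by
  rw [gam, smul_dotProduct, add_dotProduct, dotProduct_E_of_inA hv one_lt_two,
    dotProduct_E_of_inA hw one_lt_two, add_zero, smul_zero]

lemma trace_symPart_Lm (hn : 0 < n) (hv : inA v₀) (hw : inA w₀) :
    trace (symPart (Lm μ v₀ w₀ D)) = μ + trace D := by
  rw [symPart_Lm, trace_add, trace_add, trace_smul, trace_add, trace_vecMulVec, trace_vecMulVec,
    trace_vecMulVec, E_one_dotProduct_E_one hn, gam_dotProduct_E_one hv hw, dotProduct_comm,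
    gam_dotProduct_E_one hv hw, trace_symPart, smul_eq_mul, mul_one, add_zero, add_zero]

lemma adJWedge_symPart_Lm_sq (hn : 0 < n) (hv : inA v₀) (hw : inA w₀) (hD : DinA D) :
    adJWedge n (symPart (Lm μ v₀ w₀ D) *ᵥ (symPart (Lm μ v₀ w₀ D) *ᵥ E n 1))
      = μ • adJWedge n (gam v₀ w₀) + adJWedge n (symPart D *ᵥ gam v₀ w₀) := by
  have hg := gam_dotProduct_E_one hv hw
  have hgT : E n 1 ⬝ᵥ gam v₀ w₀ = 0 := by rw [dotProduct_comm, hg]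
  have hS1 : symPart (Lm μ v₀ w₀ D) *ᵥ E n 1 = μ • E n 1 + gam v₀ w₀ := by
    simp only [symPart_Lm, add_mulVec, smul_mulVec, vecMulVec_mulVec, op_smul_eq_smul,
      E_one_dotProduct_E_one hn, hg, symPart_mulVec_E_of_DinA hD one_lt_two, one_smul,
      zero_smul, add_zero]
  have hSg : symPart (Lm μ v₀ w₀ D) *ᵥ gam v₀ w₀
      = (gam v₀ w₀ ⬝ᵥ gam v₀ w₀) • E n 1 + symPart D *ᵥ gam v₀ w₀ := by
    simp only [symPart_Lm, add_mulVec, smul_mulVec, vecMulVec_mulVec, op_smul_eq_smul, hgT,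
      zero_smul, smul_zero, zero_add]
  rw [hS1, mulVec_add, mulVec_smul, hS1, hSg]
  simp only [map_add, map_smul, adJWedge_E_one hn, smul_zero, zero_add]

theorem harmonic_iff_adJWedge_eq_zero {nabla : G n → G n → G n} (hn : 0 < n) (hv : inA v₀)
    (hD : DinA D) (hDJ : D * Jm n = Jm n * D) (hK : Koszul (Lm μ v₀ 0 D) nabla) :
    Harmonic nabla ↔ adJWedge n (trace D • v₀ - D *ᵥ v₀) = 0 := by
  have h0 : inA (0 : G n) := fun _ _ => rfl
  have hr : rho v₀ 0 = (1 / 2 : ℝ) • v₀ := by rw [rho, sub_zero]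
  have hg : gam v₀ 0 = (1 / 2 : ℝ) • v₀ := by rw [gam, add_zero]
  have hr0 : rho v₀ 0 ⬝ᵥ E n 0 = 0 := by
    rw [hr, smul_dotProduct, dotProduct_E_of_inA hv two_pos, smul_zero]
  have hr1 : rho v₀ 0 ⬝ᵥ E n 1 = 0 := by
    rw [hr, smul_dotProduct, dotProduct_E_of_inA hv one_lt_two, smul_zero]
  have hDv : D *ᵥ v₀ = symPart D *ᵥ v₀ + skewPart D *ᵥ v₀ := by
    rw [← add_mulVec, symPart_add_skewPart]
  rw [harmonic_iff_of_koszul hn (Lm_mulVec_E_zero hn h0 hD) (E_zero_vecMul_Lm hn hv hD) hK,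
    skewPart_Lm, lie_Jm_lie_lie_wedge_add_Jm hn hr0 hr1 (skewPart_transpose D)
      (skewPart_mulVec_E_of_DinA hD two_pos) (skewPart_mulVec_E_of_DinA hD one_lt_two)
      (skewPart_mul_Jm_comm hDJ),
    lie_Jm_lie_wedge_add_Jm hn (skewPart_mul_Jm_comm hDJ), adJWedge_symPart_Lm_sq hn hv h0 hD,
    trace_symPart_Lm hn hv h0, hr, hg, hDv]
  simp only [mulVec_smul, map_smul, map_sub, map_add]
  exact Eq.congr_left (by module)

end Lm

end AlmostAbelian

open AlmostAbelian in
theorem statement3_general (n : ℕ) (hn : 2 ≤ n) (μ : ℝ) (v₀ w₀ : G n) (hv : inA v₀)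
    (D : Matrix (Fin (2*n)) (Fin (2*n)) ℝ) (hD : DinA D)
    (hw0 : w₀ = 0)
    (hint : (∀ x : G n, inA x → (D).mulVec ((Jm n).mulVec x) = (Jm n).mulVec ((D).mulVec x)))
    (nabla : G n → G n → G n) (hK : Koszul (Lm μ v₀ w₀ D) nabla) :
    Harmonic nabla ↔ D.mulVec v₀ = Matrix.trace D • v₀ := by
  subst hw0
  have hn' : 0 < n := by omega
  have hc : inA (Matrix.trace D • v₀ - D *ᵥ v₀) := fun i hi => by
    rw [Pi.sub_apply, Pi.smul_apply, hv i hi, inA_mulVec_of_DinA hD v₀ i hi, smul_zero, sub_zero]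
  rw [harmonic_iff_adJWedge_eq_zero hn' hv hD (mul_Jm_comm_of_DinA hn' hD hint) hK,
    adJWedge_eq_zero_iff hn' (dotProduct_E_of_inA hc two_pos)
      (dotProduct_E_of_inA hc one_lt_two), sub_eq_zero, eq_comm]

/-- Corollary 3.5: if `J` is integrable (`w₀ = 0` and `D J' = J' D`),
then `J` is harmonic iff `D v₀ = (Tr D) v₀`. -/
theorem statement3 (n : ℕ) (hn : 2 ≤ n) (μ : ℝ) (v₀ w₀ : G n) (hv : inA v₀) (hw : inA w₀)
    (D : Matrix (Fin (2*n)) (Fin (2*n)) ℝ) (hD : DinA D)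
    (hw0 : w₀ = 0)
    (hint : (∀ x : G n, inA x → (D).mulVec ((Jm n).mulVec x) = (Jm n).mulVec ((D).mulVec x)))
    (nabla : G n → G n → G n) (hK : Koszul (Lm μ v₀ w₀ D) nabla) :
    Harmonic nabla ↔ D.mulVec v₀ = Matrix.trace D • v₀ :=
  statement3_general n hn μ v₀ w₀ hv D hD hw0 hint nabla hK
end
end

section
/- If 3(∇_xω)(y,z) = dω(x,y,z) for all x, y, z ∈ g (i.e. the almost Hermitian structure is nearly Kähler, class W₁), then ∇ω = 0, i.e. (∇_xω)(y,z) = 0 for all x, y, z ∈ g (the structure is Kähler). In other words, on an almost abelian Lie algebra the class W₁ coincides with the Kähler class {0}. -/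
open scoped BigOperators
open Matrix

noncomputable section

/-! ### Auxiliary material for the proof -/

namespace S5aux

variable {n : ℕ}

lemma inn_eq (x y : G n) : inn x y = x ⬝ᵥ y := rfl

lemma inn_comm (x y : G n) : inn x y = inn y x := dotProduct_comm x y

lemma inn_al (a b c : G n) : inn (a + b) c = inn a c + inn b c := add_dotProduct a b c
lemma inn_ar (a b c : G n) : inn a (b + c) = inn a b + inn a c := dotProduct_add a b c
lemma inn_sl (r : ℝ) (a c : G n) : inn (r • a) c = r * inn a c := smul_dotProduct r a c
lemma inn_sr (r : ℝ) (a c : G n) : inn a (r • c) = r * inn a c := dotProduct_smul r a c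
lemma inn_subl (a b c : G n) : inn (a - b) c = inn a c - inn b c := sub_dotProduct a b c
lemma inn_subr (a b c : G n) : inn a (b - c) = inn a b - inn a c := dotProduct_sub a b c
lemma inn_negl (a c : G n) : inn (-a) c = - inn a c := neg_dotProduct a c
lemma inn_zl (c : G n) : inn 0 c = 0 := zero_dotProduct c
lemma inn_zr (c : G n) : inn c 0 = 0 := dotProduct_zero c

lemma Jm_transpose : (Jm n)ᵀ = -(Jm n) := by
  ext k l
  simp only [Matrix.transpose_apply, Matrix.neg_apply, Jm, Matrix.of_apply]
  by_cases h1 : (l : ℕ) = (k : ℕ) + 1 ∧ Even (k : ℕ) <;>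
    by_cases h2 : (k : ℕ) = (l : ℕ) + 1 ∧ Even (l : ℕ)
  · omega
  · simp only [if_pos h1, if_neg h2]; try norm_num
  · simp only [if_neg h1, if_pos h2]; try norm_num
  · simp only [if_neg h1, if_neg h2]; try norm_num

lemma om_eq (a b : G n) : om a b = - inn a ((Jm n) *ᵥ b) := by
  have h : inn a ((Jm n) *ᵥ b) = ((Jm n)ᵀ *ᵥ a) ⬝ᵥ b := by
    rw [inn_eq, dotProduct_mulVec, ← mulVec_transpose]
  rw [om, inn_eq, h, Jm_transpose, Matrix.neg_mulVec, neg_dotProduct, neg_neg]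

lemma om_comm' (a b : G n) : om a b = inn b ((Jm n) *ᵥ a) := by
  rw [om, inn_eq, inn_eq, dotProduct_comm]

/-- The Koszul right-hand side. -/
def Kz (L : Matrix (Fin (2*n)) (Fin (2*n)) ℝ) (x y z : G n) : ℝ :=
  inn (br L x y) z - inn (br L y z) x + inn (br L z x) y

/-- Explicit formula for `∇ω` coming from the Koszul formula. -/
def Ff (L : Matrix (Fin (2*n)) (Fin (2*n)) ℝ) (x y z : G n) : ℝ :=
  (1/2) * (Kz L x y ((Jm n) *ᵥ z) - Kz L x z ((Jm n) *ᵥ y))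

/-- The symmetric bilinear form `G(a,b) = ⟨La,b⟩ + ⟨Lb,a⟩`. -/
def Gf (L : Matrix (Fin (2*n)) (Fin (2*n)) ℝ) (a b : G n) : ℝ :=
  inn (L.mulVec a) b + inn (L.mulVec b) a

lemma br_skew (L : Matrix (Fin (2*n)) (Fin (2*n)) ℝ) (a b : G n) :
    br L a b = - br L b a := by
  unfold br; rw [neg_sub]

lemma nablaOm_eq {L : Matrix (Fin (2*n)) (Fin (2*n)) ℝ} {nabla : G n → G n → G n}
    (hK : Koszul L nabla) (x y z : G n) :
    nablaOm nabla x y z = Ff L x y z := by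
  have h1 := hK x y ((Jm n) *ᵥ z)
  have h2 := hK x z ((Jm n) *ᵥ y)
  unfold nablaOm Ff Kz
  rw [om_eq (nabla x y) z, om_comm' y (nabla x z)]
  linarith

lemma dOm_eq (L : Matrix (Fin (2*n)) (Fin (2*n)) ℝ) (x y z : G n) :
    dOm L x y z = Ff L x y z + Ff L y z x + Ff L z x y := by
  unfold dOm Ff Kz
  rw [om_eq (br L x y) z, om_eq (br L y z) x, om_eq (br L z x) y]
  rw [br_skew L y x, br_skew L z y, br_skew L x z,
      br_skew L ((Jm n) *ᵥ z) x, br_skew L ((Jm n) *ᵥ z) y,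
      br_skew L ((Jm n) *ᵥ x) y, br_skew L ((Jm n) *ᵥ x) z,
      br_skew L ((Jm n) *ᵥ y) z, br_skew L ((Jm n) *ᵥ y) x]
  simp only [inn_negl]
  ring

lemma Ff_swap (L : Matrix (Fin (2*n)) (Fin (2*n)) ℝ) (x y z : G n) :
    Ff L x z y = - Ff L x y z := by
  unfold Ff; ring

lemma Ff_split (L : Matrix (Fin (2*n)) (Fin (2*n)) ℝ) (r : ℝ) (e b y z : G n) :
    Ff L (r • e + b) y z = r * Ff L e y z + Ff L b y z := by
  unfold Ff Kz br
  simp only [Matrix.mulVec_add, Matrix.mulVec_smul, inn_al, inn_sl, inn_ar, inn_sr,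
    inn_subl, inn_subr, add_smul, smul_add, smul_sub, smul_smul]
  ring

lemma inn_E0 (h0 : 0 < 2*n) (v : G n) : inn v (E n 0) = v ⟨0, h0⟩ := by
  unfold inn E
  have key : ∀ i : Fin (2*n), (v i * if (i : ℕ) = 0 then 1 else 0)
      = if i = ⟨0, h0⟩ then v i else 0 := by
    intro i
    by_cases hi : i = ⟨0, h0⟩
    · subst hi; simp
    · have : (i : ℕ) ≠ 0 := by simpa [Fin.ext_iff] using hi
      simp [hi, this]
  rw [Finset.sum_congr rfl fun i _ => key i, Finset.sum_ite_eq' Finset.univ]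
  simp

lemma Jv_at0 (h0 : 0 < 2*n) (h1 : 1 < 2*n) (v : G n) :
    ((Jm n) *ᵥ v) ⟨0, h0⟩ = - v ⟨1, h1⟩ := by
  have key : ∀ l : Fin (2*n), Jm n ⟨0, h0⟩ l * v l
      = if l = ⟨1, h1⟩ then -v l else 0 := by
    intro l
    by_cases hl : l = ⟨1, h1⟩
    · subst hl; simp [Jm]
    · have hl' : (l : ℕ) ≠ 1 := by simpa [Fin.ext_iff] using hl
      simp [Jm, hl, hl']
  show (fun j => Jm n ⟨0, h0⟩ j) ⬝ᵥ v = _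
  unfold dotProduct
  rw [Finset.sum_congr rfl fun l _ => key l, Finset.sum_ite_eq' Finset.univ]
  simp

lemma Jv_at1 (h0 : 0 < 2*n) (h1 : 1 < 2*n) (v : G n) :
    ((Jm n) *ᵥ v) ⟨1, h1⟩ = v ⟨0, h0⟩ := by
  have key : ∀ l : Fin (2*n), Jm n ⟨1, h1⟩ l * v l
      = if l = ⟨0, h0⟩ then v l else 0 := by
    intro l
    by_cases hl : l = ⟨0, h0⟩
    · subst hl; simp [Jm]
    · have hl' : (l : ℕ) ≠ 0 := by simpa [Fin.ext_iff] using hl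
      simp [Jm, hl, hl']
      try omega
  show (fun j => Jm n ⟨1, h1⟩ j) ⬝ᵥ v = _
  unfold dotProduct
  rw [Finset.sum_congr rfl fun l _ => key l, Finset.sum_ite_eq' Finset.univ]
  simp

lemma L_col0 (L : Matrix (Fin (2*n)) (Fin (2*n)) ℝ)
    (hL : ∀ k l : Fin (2*n), ((k : ℕ) = 0 ∨ (l : ℕ) = 0) → L k l = 0) :
    L *ᵥ (E n 0) = 0 := by
  funext k
  show (fun j => L k j) ⬝ᵥ (E n 0) = 0
  unfold dotProduct E
  apply Finset.sum_eq_zero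
  intro l _
  by_cases hl : (l : ℕ) = 0
  · simp [hL k l (Or.inr hl)]
  · simp [hl]

lemma L_row0 (L : Matrix (Fin (2*n)) (Fin (2*n)) ℝ)
    (hL : ∀ k l : Fin (2*n), ((k : ℕ) = 0 ∨ (l : ℕ) = 0) → L k l = 0)
    (h0 : 0 < 2*n) (v : G n) :
    (L *ᵥ v) ⟨0, h0⟩ = 0 := by
  show (fun j => L ⟨0, h0⟩ j) ⬝ᵥ v = 0
  unfold dotProduct
  apply Finset.sum_eq_zero
  intro l _
  simp [hL ⟨0, h0⟩ l (Or.inl rfl)]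

end S5aux

open S5aux

/-- on an almost abelian Lie algebra, nearly Kähler (`3∇ω = dω`)
implies Kähler (`∇ω = 0`): the class `W₁` coincides with `{0}`. -/
theorem statement5 (n : ℕ) (hn : 2 ≤ n)
    (L : Matrix (Fin (2*n)) (Fin (2*n)) ℝ)
    (hL : ∀ k l : Fin (2*n), ((k : ℕ) = 0 ∨ (l : ℕ) = 0) → L k l = 0)
    (nabla : G n → G n → G n) (hK : Koszul L nabla)
    (hNK : ∀ x y z : G n, 3 * nablaOm nabla x y z = dOm L x y z) :
    ∀ x y z : G n, nablaOm nabla x y z = 0 := by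
  have h0 : 0 < 2*n := by omega
  have h1 : 1 < 2*n := by omega
  -- `∇ω = Ff` and the standard identity `dω = 𝔖 ∇ω`
  have hA : ∀ x y z : G n, nablaOm nabla x y z = Ff L x y z :=
    fun x y z => nablaOm_eq hK x y z
  have hNK' : ∀ x y z : G n, 3 * Ff L x y z = dOm L x y z := by
    intro x y z; rw [← hA]; exact hNK x y z
  have hR : ∀ x y z : G n, 2 * Ff L x y z = Ff L y z x + Ff L z x y := by
    intro x y z
    have h := hNK' x y z
    rw [dOm_eq L x y z] at h
    linarith
  have hcyc : ∀ x y z : G n, Ff L x y z = Ff L y z x := by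
    intro x y z
    have a := hR x y z; have b := hR y z x; have c := hR z x y
    linarith
  have hsw : ∀ x y z : G n, Ff L x z y = - Ff L x y z := fun x y z => Ff_swap L x y z
  have haab : ∀ a b : G n, Ff L a a b = 0 := by
    intro a b
    have h := hcyc a a b
    have h2 := hsw a a b
    linarith
  have hbaa : ∀ a b : G n, Ff L b a a = 0 := by
    intro a b
    have h := hsw b a a
    linarith
  have haba : ∀ a b : G n, Ff L a b a = 0 := by
    intro a b
    have h := hcyc a b a
    rw [h]; exact hbaa a b
  -- brackets of two elements of `u` vanish
  have hbr0 : ∀ x y : G n, x ⟨0, h0⟩ = 0 → y ⟨0, h0⟩ = 0 → br L x y = 0 := by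
    intro x y hx hy
    unfold br
    rw [inn_E0 h0 x, inn_E0 h0 y, hx, hy]
    simp
  -- `Ff` vanishes on `u × u × u`
  have hz3 : ∀ x y z : G n, x ⟨0, h0⟩ = 0 → y ⟨0, h0⟩ = 0 → z ⟨0, h0⟩ = 0 →
      Ff L x y z = 0 := by
    intro x y z hx hy hz
    have h := hNK' x y z
    have hd0 : dOm L x y z = 0 := by
      unfold dOm
      rw [hbr0 x y hx hy, hbr0 y z hy hz, hbr0 z x hz hx]
      simp [om, Matrix.mulVec_zero, inn]
    linarith
  -- Koszul expression on `u × u × (anything)`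
  have hKzu : ∀ a b q : G n, a ⟨0, h0⟩ = 0 → b ⟨0, h0⟩ = 0 →
      Kz L a b q = inn q (E n 0) * Gf L a b := by
    intro a b q ha hb
    unfold Kz br Gf
    rw [inn_E0 h0 a, inn_E0 h0 b, ha, hb]
    simp only [zero_smul, zero_sub, sub_zero, inn_negl, inn_sl, inn_zl]
    ring
  -- `Ff` on `u × u × u`, explicitly
  have hFfu : ∀ a b w : G n, a ⟨0, h0⟩ = 0 → b ⟨0, h0⟩ = 0 → w ⟨0, h0⟩ = 0 →
      Ff L a b w = (1/2) * (-(w ⟨1, h1⟩) * Gf L a b + (b ⟨1, h1⟩) * Gf L a w) := by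
    intro a b w ha hb hw
    unfold Ff
    rw [hKzu a b ((Jm n) *ᵥ w) ha hb, hKzu a w ((Jm n) *ᵥ b) ha hw,
      inn_E0 h0 ((Jm n) *ᵥ w), inn_E0 h0 ((Jm n) *ᵥ b),
      Jv_at0 h0 h1 w, Jv_at0 h0 h1 b]
    ring
  have hE00 : (E n 0 : G n) ⟨0, h0⟩ = 1 := by simp [E]
  have hE01 : (E n 0 : G n) ⟨1, h1⟩ = 0 := by simp [E]
  have hE10 : (E n 1 : G n) ⟨0, h0⟩ = 0 := by simp [E]
  have hE11 : (E n 1 : G n) ⟨1, h1⟩ = 1 := by simp [E]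
  -- `G(u, e₀) = 0`
  have hGe0 : ∀ u : G n, Gf L u (E n 0) = 0 := by
    intro u
    unfold Gf
    rw [L_col0 L hL, inn_E0 h0 (L.mulVec u), L_row0 L hL h0 u, inn_zl]
    ring
  -- the key vanishing `G(u, Jv) = 0` for `u, v ∈ u`
  have hGJ : ∀ u v : G n, u ⟨0, h0⟩ = 0 → v ⟨0, h0⟩ = 0 →
      Gf L u ((Jm n) *ᵥ v) = 0 := by
    intro u v hu hv
    have hpi0 : ((Jm n) *ᵥ v + (v ⟨1, h1⟩) • E n 0) ⟨0, h0⟩ = 0 := by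
      simp [Jv_at0 h0 h1 v, hE00]
    have hpi1 : ((Jm n) *ᵥ v + (v ⟨1, h1⟩) • E n 0) ⟨1, h1⟩ = 0 := by
      simp [Jv_at1 h0 h1 v, hE01, hv]
    have hF := hFfu u ((Jm n) *ᵥ v + (v ⟨1, h1⟩) • E n 0) (E n 1) hu hpi0 hE10
    have hF0 := hz3 u ((Jm n) *ᵥ v + (v ⟨1, h1⟩) • E n 0) (E n 1) hu hpi0 hE10
    rw [hF0, hE11, hpi1] at hF
    have hGup : Gf L u ((Jm n) *ᵥ v + (v ⟨1, h1⟩) • E n 0) = 0 := by linarith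
    have hlin : Gf L u ((Jm n) *ᵥ v + (v ⟨1, h1⟩) • E n 0)
        = Gf L u ((Jm n) *ᵥ v) + (v ⟨1, h1⟩) * Gf L u (E n 0) := by
      unfold Gf
      simp only [Matrix.mulVec_add, Matrix.mulVec_smul, inn_al, inn_ar, inn_sl, inn_sr]
      ring
    rw [hlin, hGe0 u] at hGup
    linarith
  -- `Ff(u, v, e₀) = 0` for `u, v ∈ u`
  have hV3 : ∀ u v : G n, u ⟨0, h0⟩ = 0 → v ⟨0, h0⟩ = 0 →
      Ff L u v (E n 0) = 0 := by
    intro u v hu hv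
    have hKz1 : Kz L u v ((Jm n) *ᵥ (E n 0)) = 0 := by
      rw [hKzu u v ((Jm n) *ᵥ (E n 0)) hu hv, inn_E0 h0, Jv_at0 h0 h1, hE01]
      ring
    have hKz2 : Kz L u (E n 0) ((Jm n) *ᵥ v) = - Gf L u ((Jm n) *ᵥ v) := by
      unfold Kz br Gf
      rw [inn_E0 h0 u, hu, inn_E0 h0 (E n 0), hE00, L_col0 L hL,
        inn_E0 h0 ((Jm n) *ᵥ v)]
      simp only [zero_smul, one_smul, smul_zero, zero_sub, sub_zero, inn_negl, inn_sl]
      rw [inn_E0 h0 (L.mulVec u), L_row0 L hL h0 u]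
      ring
    unfold Ff
    rw [hKz1, hKz2, hGJ u v hu hv]
    ring
  -- `Ff(e₀, y, z) = 0` for all `y, z`
  have hE0yz : ∀ y z : G n, Ff L (E n 0) y z = 0 := by
    intro y z
    have hyh : (y - y ⟨0, h0⟩ • E n 0) ⟨0, h0⟩ = 0 := by
      simp [hE00]
    have hzh : (z - z ⟨0, h0⟩ • E n 0) ⟨0, h0⟩ = 0 := by
      simp [hE00]
    have hy : y = y ⟨0, h0⟩ • E n 0 + (y - y ⟨0, h0⟩ • E n 0) := by abel
    have hz : z = z ⟨0, h0⟩ • E n 0 + (z - z ⟨0, h0⟩ • E n 0) := by abel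
    have step1 : Ff L (E n 0) y z = Ff L y z (E n 0) := hcyc (E n 0) y z
    have step2 : Ff L y z (E n 0)
        = y ⟨0, h0⟩ * Ff L (E n 0) z (E n 0) + Ff L (y - y ⟨0, h0⟩ • E n 0) z (E n 0) := by
      conv_lhs => rw [hy]
      rw [Ff_split]
    have step3 : Ff L (E n 0) z (E n 0) = 0 := haba (E n 0) z
    have step4 : Ff L (y - y ⟨0, h0⟩ • E n 0) z (E n 0)
        = Ff L z (E n 0) (y - y ⟨0, h0⟩ • E n 0) := hcyc _ _ _
    have step5 : Ff L z (E n 0) (y - y ⟨0, h0⟩ • E n 0)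
        = z ⟨0, h0⟩ * Ff L (E n 0) (E n 0) (y - y ⟨0, h0⟩ • E n 0)
          + Ff L (z - z ⟨0, h0⟩ • E n 0) (E n 0) (y - y ⟨0, h0⟩ • E n 0) := by
      conv_lhs => rw [hz]
      rw [Ff_split]
    have step6 : Ff L (E n 0) (E n 0) (y - y ⟨0, h0⟩ • E n 0) = 0 := haab _ _
    have step7 : Ff L (z - z ⟨0, h0⟩ • E n 0) (E n 0) (y - y ⟨0, h0⟩ • E n 0)
        = - Ff L (z - z ⟨0, h0⟩ • E n 0) (y - y ⟨0, h0⟩ • E n 0) (E n 0) :=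
      hsw _ _ _
    have step8 : Ff L (z - z ⟨0, h0⟩ • E n 0) (y - y ⟨0, h0⟩ • E n 0) (E n 0) = 0 :=
      hV3 _ _ hzh hyh
    rw [step1, step2, step3, step4, step5, step6, step7, step8]
    ring
  -- final assembly
  intro x y z
  rw [hA x y z]
  have hxh : (x - x ⟨0, h0⟩ • E n 0) ⟨0, h0⟩ = 0 := by simp [hE00]
  have hyh : (y - y ⟨0, h0⟩ • E n 0) ⟨0, h0⟩ = 0 := by simp [hE00]
  have hzh : (z - z ⟨0, h0⟩ • E n 0) ⟨0, h0⟩ = 0 := by simp [hE00]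
  have hx : x = x ⟨0, h0⟩ • E n 0 + (x - x ⟨0, h0⟩ • E n 0) := by abel
  have hy : y = y ⟨0, h0⟩ • E n 0 + (y - y ⟨0, h0⟩ • E n 0) := by abel
  have hz : z = z ⟨0, h0⟩ • E n 0 + (z - z ⟨0, h0⟩ • E n 0) := by abel
  have s1 : Ff L x y z
      = x ⟨0, h0⟩ * Ff L (E n 0) y z + Ff L (x - x ⟨0, h0⟩ • E n 0) y z := by
    conv_lhs => rw [hx]
    rw [Ff_split]
  have s2 : Ff L (x - x ⟨0, h0⟩ • E n 0) y z
      = Ff L y z (x - x ⟨0, h0⟩ • E n 0) := hcyc _ _ _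
  have s3 : Ff L y z (x - x ⟨0, h0⟩ • E n 0)
      = y ⟨0, h0⟩ * Ff L (E n 0) z (x - x ⟨0, h0⟩ • E n 0)
        + Ff L (y - y ⟨0, h0⟩ • E n 0) z (x - x ⟨0, h0⟩ • E n 0) := by
    conv_lhs => rw [hy]
    rw [Ff_split]
  have s4 : Ff L (y - y ⟨0, h0⟩ • E n 0) z (x - x ⟨0, h0⟩ • E n 0)
      = Ff L z (x - x ⟨0, h0⟩ • E n 0) (y - y ⟨0, h0⟩ • E n 0) := hcyc _ _ _
  have s5 : Ff L z (x - x ⟨0, h0⟩ • E n 0) (y - y ⟨0, h0⟩ • E n 0)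
      = z ⟨0, h0⟩ * Ff L (E n 0) (x - x ⟨0, h0⟩ • E n 0) (y - y ⟨0, h0⟩ • E n 0)
        + Ff L (z - z ⟨0, h0⟩ • E n 0) (x - x ⟨0, h0⟩ • E n 0) (y - y ⟨0, h0⟩ • E n 0) := by
    conv_lhs => rw [hz]
    rw [Ff_split]
  have s6 : Ff L (z - z ⟨0, h0⟩ • E n 0) (x - x ⟨0, h0⟩ • E n 0) (y - y ⟨0, h0⟩ • E n 0) = 0 :=
    hz3 _ _ _ hzh hxh hyh
  rw [s1, hE0yz y z, s2, s3, hE0yz z (x - x ⟨0, h0⟩ • E n 0), s4, s5,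
    hE0yz (x - x ⟨0, h0⟩ • E n 0) (y - y ⟨0, h0⟩ • E n 0), s6]
  ring
end
end

section
/- The codifferential δω vanishes identically on g if and only if Tr D = 0 and v₀ = 0 (equivalently, μ = Tr S and v₀ = 0, where S is the symmetric part of L). -/
open scoped BigOperators
open Matrix

noncomputable section

section Aux
variable {n : ℕ}

lemma inn_comm (x y : G n) : inn x y = inn y x := by
  unfold inn; exact Finset.sum_congr rfl fun i _ => mul_comm _ _

lemma inn_sub_left (x y z : G n) : inn (x - y) z = inn x z - inn y z := by
  unfold inn
  rw [← Finset.sum_sub_distrib]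
  exact Finset.sum_congr rfl fun j _ => by simp [sub_mul]

lemma inn_smul_left (r : ℝ) (x z : G n) : inn (r • x) z = r * inn x z := by
  unfold inn
  rw [Finset.mul_sum]
  exact Finset.sum_congr rfl fun j _ => by simp [smul_eq_mul]; ring

lemma inn_E_right (v : G n) (i : Fin (2*n)) : inn v (E n i.val) = v i := by
  unfold inn E
  rw [Finset.sum_eq_single i]
  · simp
  · intro j _ hj; simp [Fin.val_eq_val, hj]
  · simp

lemma inn_E_left (v : G n) (i : Fin (2*n)) : inn (E n i.val) v = v i := by
  rw [inn_comm]; exact inn_E_right v i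

lemma mulVec_apply (M : Matrix (Fin (2*n)) (Fin (2*n)) ℝ) (v : G n) (k : Fin (2*n)) :
    M.mulVec v k = ∑ l, M k l * v l := rfl

lemma mulVec_E_apply (M : Matrix (Fin (2*n)) (Fin (2*n)) ℝ) (i k : Fin (2*n)) :
    M.mulVec (E n i.val) k = M k i := by
  rw [mulVec_apply]
  rw [Finset.sum_eq_single i]
  · simp [E]
  · intro j _ hj; simp [E, Fin.val_eq_val, hj]
  · simp

lemma mulVec_E (M : Matrix (Fin (2*n)) (Fin (2*n)) ℝ) (i : Fin (2*n)) :
    M.mulVec (E n i.val) = fun k => M k i := funext fun k => mulVec_E_apply M i k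

lemma inn_mulVecE_right (M : Matrix (Fin (2*n)) (Fin (2*n)) ℝ) (u : G n) (i : Fin (2*n)) :
    inn u (M.mulVec (E n i.val)) = ∑ k, u k * M k i := by
  rw [mulVec_E]; rfl

lemma inn_mulVecE_left (M : Matrix (Fin (2*n)) (Fin (2*n)) ℝ) (u : G n) (i : Fin (2*n)) :
    inn (M.mulVec (E n i.val)) u = ∑ k, M k i * u k := by
  rw [mulVec_E]; rfl

lemma inn_br (L : Matrix (Fin (2*n)) (Fin (2*n)) ℝ) (a b c : G n) :
    inn (br L a b) c
      = inn a (E n 0) * inn (L.mulVec b) c - inn b (E n 0) * inn (L.mulVec a) c := by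
  rw [br, inn_sub_left, inn_smul_left, inn_smul_left]

lemma Jm_skew (k l : Fin (2*n)) : Jm n k l + Jm n l k = 0 := by
  unfold Jm
  simp only [Matrix.of_apply, Nat.even_iff]
  split_ifs <;> (try (exfalso; omega)) <;> ring

lemma sum_delta (f : Fin (2*n) → ℝ) (j : Fin (2*n)) : (∑ i, E n i.val j * f i) = f j := by
  rw [Finset.sum_eq_single j]
  · simp [E]
  · intro i _ hij
    have h : ¬ (j = i) := fun h => hij h.symm
    simp [E, Fin.val_eq_val, h]
  · simp

end Aux

section Aux2
variable {n : ℕ}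

lemma mulVec_mulVecE_apply (L M : Matrix (Fin (2*n)) (Fin (2*n)) ℝ) (i k : Fin (2*n)) :
    L.mulVec (M.mulVec (E n i.val)) k = ∑ l, L k l * M l i := by
  rw [mulVec_E]; rfl

lemma inn_mulVec_mulVecE (L M : Matrix (Fin (2*n)) (Fin (2*n)) ℝ) (u : G n) (i : Fin (2*n)) :
    inn (L.mulVec (M.mulVec (E n i.val))) u = ∑ k, (∑ l, L k l * M l i) * u k := by
  rw [mulVec_E]; rfl

lemma sum_split (f1 f2 f3 f4 f5 f6 f7 f8 : Fin (2*n) → ℝ) :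
    (∑ i, (f1 i - f2 i + (f3 i - f4 i - f5 i + f6 i + f7 i - f8 i)/2))
      = (∑ i, f1 i) - (∑ i, f2 i)
        + ((∑ i, f3 i) - (∑ i, f4 i) - (∑ i, f5 i) + (∑ i, f6 i) + (∑ i, f7 i)
            - (∑ i, f8 i))/2 := by
  simp only [sub_eq_add_neg, add_div, neg_div, Finset.sum_add_distrib, ← Finset.sum_div,
    Finset.sum_neg_distrib]

end Aux2

/-- `δω = 0` iff `Tr D = 0` and `v₀ = 0`. -/
theorem statement8 (n : ℕ) (hn : 2 ≤ n) (μ : ℝ) (v₀ w₀ : G n) (hv : inA v₀) (hw : inA w₀)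
    (D : Matrix (Fin (2*n)) (Fin (2*n)) ℝ) (hD : DinA D)
    (nabla : G n → G n → G n) (hK : Koszul (Lm μ v₀ w₀ D) nabla) :
    (∀ x : G n, deltaOm nabla x = 0) ↔ (Matrix.trace D = 0 ∧ v₀ = 0) := by
  have h2n : 1 < 2*n := by omega
  set L := Lm μ v₀ w₀ D with hLdef
  obtain ⟨i0, hi0v⟩ : ∃ j : Fin (2*n), (j : ℕ) = 0 := ⟨⟨0, by omega⟩, rfl⟩
  obtain ⟨i1, hi1v⟩ : ∃ j : Fin (2*n), (j : ℕ) = 1 := ⟨⟨1, by omega⟩, rfl⟩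
  have hE0 : E n 0 = E n i0.val := by rw [hi0v]
  -- inner products with nabla from the Koszul formula
  have nab : ∀ a b c : G n, inn (nabla a b) c
      = (inn (br L a b) c - inn (br L b c) a + inn (br L c a) b)/2 := by
    intro a b c; have := hK a b c; linarith
  -- J is skew wrt inn
  have Jsum : ∀ u z : G n, inn ((Jm n).mulVec u) z + inn u ((Jm n).mulVec z) = 0 := by
    intro u z
    unfold inn Matrix.mulVec dotProduct
    have h1 : (∑ k, (∑ l, Jm n k l * u l) * z k) = ∑ k, ∑ l, Jm n k l * (u l * z k) :=
      Finset.sum_congr rfl fun k _ => by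
        rw [Finset.sum_mul]; exact Finset.sum_congr rfl fun l _ => by ring
    have h2 : (∑ k, u k * (∑ l, Jm n k l * z l)) = ∑ k, ∑ l, Jm n l k * (u l * z k) := by
      have h3 : (∑ k, u k * (∑ l, Jm n k l * z l)) = ∑ k, ∑ l, u k * (Jm n k l * z l) :=
        Finset.sum_congr rfl fun k _ => Finset.mul_sum _ _ _
      rw [h3, Finset.sum_comm]
      exact Finset.sum_congr rfl fun k _ => Finset.sum_congr rfl fun l _ => by ring
    rw [h1, h2, ← Finset.sum_add_distrib]
    apply Finset.sum_eq_zero; intro k _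
    rw [← Finset.sum_add_distrib]
    apply Finset.sum_eq_zero; intro l _
    rw [← add_mul, Jm_skew, zero_mul]
  -- entries of the first row / column of Jm
  have Jm_row0 : ∀ l : Fin (2*n), Jm n i0 l = if l = i1 then (-1:ℝ) else 0 := by
    intro l
    simp only [Jm, Matrix.of_apply, Nat.even_iff, hi0v, hi1v, Fin.ext_iff]
    split_ifs <;> first | rfl | (exfalso; omega) | simp_all
  have Jm_col0 : ∀ k : Fin (2*n), Jm n k i0 = if k = i1 then (1:ℝ) else 0 := by
    intro k
    simp only [Jm, Matrix.of_apply, Nat.even_iff, hi0v, hi1v, Fin.ext_iff]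
    split_ifs <;> first | rfl | (exfalso; omega) | simp_all
  have hJx0 : ∀ x : G n, (Jm n).mulVec x i0 = - x i1 := by
    intro x
    rw [mulVec_apply]
    rw [Finset.sum_eq_single i1]
    · rw [Jm_row0]; simp
    · intro l _ hl; rw [Jm_row0]; simp [hl]
    · simp
  -- first row of L vanishes
  have Lrow0 : ∀ l : Fin (2*n), L i0 l = 0 := by
    intro l
    have hv0 : v₀ i0 = 0 := hv i0 (by omega)
    have hd : D i0 l = 0 := hD i0 l (Or.inl (by omega))
    simp [hLdef, Lm, hi0v, hv0, hd]
  -- column 1 of L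
  have Lcol1 : ∀ k : Fin (2*n), L k i1 = (if (k:ℕ) = 1 then μ else 0) + v₀ k := by
    intro k
    have hw1 : w₀ i1 = 0 := hw i1 (by omega)
    have hd : D k i1 = 0 := hD k i1 (Or.inr (by omega))
    by_cases hk : (k:ℕ) = 1 <;> simp [hLdef, Lm, hi1v, hd, hw1, hk]
  -- trace of L
  have traceL : Matrix.trace L = μ + Matrix.trace D := by
    unfold Matrix.trace Matrix.diag
    have : ∀ k : Fin (2*n), L k k = (if k = i1 then μ else 0) + D k k := by
      intro k
      by_cases hk : k = i1
      · have hk1 : (k:ℕ) = 1 := by rw [hk, hi1v]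
        have hv1 : v₀ k = 0 := hv k (by omega)
        have hw1 : w₀ k = 0 := hw k (by omega)
        rw [hk] at hv1 hw1 ⊢
        simp [hLdef, Lm, hi1v, hv1, hw1]
      · have hk' : ¬ ((k:ℕ) = 1) := by
          intro h; exact hk (Fin.ext (by rw [h, hi1v]))
        simp [hLdef, Lm, hk, hk']
    rw [Finset.sum_congr rfl fun k _ => this k, Finset.sum_add_distrib]
    congr 1
    simp [Finset.sum_ite_eq']
  -- key formula: δω(x) = (Tr D) x₁ − ⟨v₀, x⟩
  have key : ∀ x : G n, deltaOm nabla x = Matrix.trace D * x i1 - inn v₀ x := by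
    intro x
    -- per-index formula for the A-part
    have hA : ∀ i : Fin (2*n),
        inn ((Jm n).mulVec (nabla (E n i.val) (E n i.val))) x
          = E n i.val i0 * (L.mulVec ((Jm n).mulVec x)) i
            - ((Jm n).mulVec x) i0 * L i i := by
      intro i
      have h0 := Jsum (nabla (E n i.val) (E n i.val)) x
      have h1 := nab (E n i.val) (E n i.val) ((Jm n).mulVec x)
      rw [inn_br, inn_br, inn_br, hE0] at h1
      simp only [inn_E_right, inn_mulVecE_right, inn_mulVecE_left, mulVec_mulVecE_apply,
        mulVec_E_apply] at h1
      linarith [h0, h1]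
    -- per-index formula for the B-part
    have hB : ∀ i : Fin (2*n),
        inn ((Jm n).mulVec (E n i.val)) (nabla (E n i.val) x)
          = (E n i.val i0 * (∑ k, (L.mulVec x) k * Jm n k i)
              - x i0 * (∑ k, L k i * Jm n k i)
              - x i0 * (∑ l, L i l * Jm n l i)
              + Jm n i0 i * (L.mulVec x) i
              + Jm n i0 i * (∑ k, L k i * x k)
              - E n i.val i0 * (∑ k, (∑ l, L k l * Jm n l i) * x k)) / 2 := by
      intro i
      have h1 := nab (E n i.val) x ((Jm n).mulVec (E n i.val))
      rw [inn_br, inn_br, inn_br, hE0] at h1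
      have h2 : inn ((Jm n).mulVec (E n i.val)) (nabla (E n i.val) x)
          = inn (nabla (E n i.val) x) ((Jm n).mulVec (E n i.val)) := inn_comm _ _
      have h3 : inn (nabla (E n i.val) x) ((Jm n).mulVec (E n i.val))
          = ∑ k, (nabla (E n i.val) x) k * Jm n k i := inn_mulVecE_right _ _ _
      simp only [inn_E_right, inn_mulVecE_right, inn_mulVecE_left, inn_mulVec_mulVecE,
        mulVec_mulVecE_apply, mulVec_E_apply] at h1
      rw [h2, h3]
      linarith [h1]
    -- expand the codifferential using the two formulas
    have step1 : deltaOm nabla x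
        = ∑ i : Fin (2*n),
            (E n i.val i0 * (L.mulVec ((Jm n).mulVec x)) i
              - ((Jm n).mulVec x) i0 * L i i
              + (E n i.val i0 * (∑ k, (L.mulVec x) k * Jm n k i)
                  - x i0 * (∑ k, L k i * Jm n k i)
                  - x i0 * (∑ l, L i l * Jm n l i)
                  + Jm n i0 i * (L.mulVec x) i
                  + Jm n i0 i * (∑ k, L k i * x k)
                  - E n i.val i0 * (∑ k, (∑ l, L k l * Jm n l i) * x k)) / 2) := by
      unfold deltaOm nablaOm om
      rw [← Finset.sum_neg_distrib]
      refine Finset.sum_congr rfl fun i _ => ?_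
      rw [hA i, hB i]
      ring
    rw [step1, sum_split]
    have s1 : (∑ i : Fin (2*n), E n i.val i0 * (L.mulVec ((Jm n).mulVec x)) i) = 0 := by
      rw [sum_delta, mulVec_apply]
      exact Finset.sum_eq_zero fun l _ => by rw [Lrow0]; ring
    have s2 : (∑ i : Fin (2*n), ((Jm n).mulVec x) i0 * L i i)
        = ((Jm n).mulVec x) i0 * (∑ i : Fin (2*n), L i i) := by
      rw [Finset.mul_sum]
    have s3 : (∑ i : Fin (2*n), E n i.val i0 * (∑ k, (L.mulVec x) k * Jm n k i))
        = (L.mulVec x) i1 := by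
      rw [sum_delta, Finset.sum_eq_single i1]
      · rw [Jm_col0]; simp
      · intro k _ hk; rw [Jm_col0]; simp [hk]
      · simp
    have s4 : (∑ i : Fin (2*n), x i0 * (∑ k, L k i * Jm n k i))
        = x i0 * (∑ i : Fin (2*n), ∑ k, L k i * Jm n k i) := by rw [Finset.mul_sum]
    have s5 : (∑ i : Fin (2*n), x i0 * (∑ l, L i l * Jm n l i))
        = x i0 * (∑ i : Fin (2*n), ∑ l, L i l * Jm n l i) := by rw [Finset.mul_sum]
    have s45 : (∑ i : Fin (2*n), ∑ k, L k i * Jm n k i)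
        + (∑ i : Fin (2*n), ∑ l, L i l * Jm n l i) = 0 := by
      have hcomm : (∑ i : Fin (2*n), ∑ l, L i l * Jm n l i)
          = ∑ i : Fin (2*n), ∑ k, L k i * Jm n i k := by rw [Finset.sum_comm]
      rw [hcomm, ← Finset.sum_add_distrib]
      refine Finset.sum_eq_zero fun i _ => ?_
      rw [← Finset.sum_add_distrib]
      refine Finset.sum_eq_zero fun k _ => ?_
      rw [← mul_add, Jm_skew, mul_zero]
    have s6 : (∑ i : Fin (2*n), Jm n i0 i * (L.mulVec x) i) = -((L.mulVec x) i1) := by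
      rw [Finset.sum_eq_single i1]
      · rw [Jm_row0]; simp
      · intro k _ hk; rw [Jm_row0]; simp [hk]
      · simp
    have s7 : (∑ i : Fin (2*n), Jm n i0 i * (∑ k, L k i * x k))
        = -(∑ k, L k i1 * x k) := by
      rw [Finset.sum_eq_single i1]
      · rw [Jm_row0]; simp
      · intro k _ hk; rw [Jm_row0]; simp [hk]
      · simp
    have s8 : (∑ i : Fin (2*n), E n i.val i0 * (∑ k, (∑ l, L k l * Jm n l i) * x k))
        = ∑ k, L k i1 * x k := by
      rw [sum_delta]
      refine Finset.sum_congr rfl fun k _ => ?_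
      congr 1
      rw [Finset.sum_eq_single i1]
      · rw [Jm_col0]; simp
      · intro l _ hl; rw [Jm_col0]; simp [hl]
      · simp
    have hS : (∑ k, L k i1 * x k) = μ * x i1 + inn v₀ x := by
      have h1 : (∑ k, L k i1 * x k)
          = ∑ k : Fin (2*n), ((if (k:ℕ) = 1 then μ else 0) * x k + v₀ k * x k) := by
        refine Finset.sum_congr rfl fun k _ => ?_
        rw [Lcol1]; ring
      rw [h1, Finset.sum_add_distrib]
      congr 1
      · rw [Finset.sum_eq_single i1]
        · simp [hi1v]
        · intro k _ hk
          have hk' : ¬ ((k:ℕ) = 1) := fun h => hk (Fin.ext (by rw [h, hi1v]))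
          simp [hk']
        · simp
    have htr : (∑ i : Fin (2*n), L i i) = μ + Matrix.trace D := by
      rw [← traceL]; rfl
    have h45 : (∑ i : Fin (2*n), ∑ l, L i l * Jm n l i)
        = -(∑ i : Fin (2*n), ∑ k, L k i * Jm n k i) := by linarith [s45]
    rw [s1, s2, s3, s4, s5, s6, s7, s8, hS, htr, hJx0, h45]
    ring
  constructor
  · intro h
    have h1 := h (E n i1.val)
    rw [key] at h1
    have hv1 : v₀ i1 = 0 := hv i1 (by omega)
    rw [inn_E_right] at h1
    simp [hv1] at h1
    have htr : Matrix.trace D = 0 := by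
      rcases h1 with h1 | h1
      · exact h1
      · exact absurd h1 (by simp [E])
    refine ⟨htr, ?_⟩
    funext j
    have h2 := h v₀
    rw [key, htr] at h2
    simp only [zero_mul, zero_sub, neg_eq_zero] at h2
    have : ∀ i : Fin (2*n), v₀ i * v₀ i = 0 := by
      intro i
      have hnn : ∀ i ∈ Finset.univ, 0 ≤ v₀ i * v₀ i := fun i _ => mul_self_nonneg _
      have := (Finset.sum_eq_zero_iff_of_nonneg hnn).mp h2 i (Finset.mem_univ i)
      exact this
    have h4 : v₀ j = 0 := by nlinarith [this j]
    simpa using h4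
  · rintro ⟨htr, hv0⟩ x
    rw [key, htr, hv0]
    simp [inn]
end
end
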